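/- arXiv:2312.15161 — 9 statements merged into one kernel-verified Lean document; each statement's English description precedes it below -/
import Mathlib

section
/- Consider the network Σ(m) of classical conditioning gates with state X(t) = X̄ at time t, where X̄ ∈ {YES, OR}^n is arbitrary. If the output satisfies y_m(t) = (⋁_{j∈J₁} v_{1j}(t)) ∨ (⋁_{j∈J₂} w_{1j}(t)) for all external inputs, then 1 ∈ J₁. Moreover, for any external input with v_{11}(t) = 1, the output satisfies y_m(t) = 1. -/
/-- The state of a classical conditioning gate: logical YES or logical OR. -/
inductive GateState : Type
  | YES : GateState
  | OR  : GateState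
  deriving DecidableEq, Repr

/-- Output of a single classical conditioning gate:
`y = v` when the state is YES, and `y = v ∨ w` when the state is OR. -/
def gateOut : GateState → Bool → Bool → Bool
  | GateState.YES, v, _ => v
  | GateState.OR,  v, w => v || w

open Classical in
/-- A trajectory of a single classical conditioning gate with unit training time `s`,
inputs `v w : ℕ → Bool`, state `x : ℕ → GateState`, and output `y : ℕ → Bool`:
the output equation and the state-update equation of the model. -/
def GateTraj (s : ℕ) (v w : ℕ → Bool) (x : ℕ → GateState) (y : ℕ → Bool) : Prop :=
  (∀ t : ℕ, y t = gateOut (x t) (v t) (w t)) ∧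
  (∀ t : ℕ, x (t + 1) =
    if x (t + 1 - s) = GateState.YES ∧
        (∀ τ ∈ Finset.Icc (t + 1 - s) t, v τ = true ∧ w τ = true) then
      GateState.OR
    else if x (t + 1 - s) = GateState.OR ∧
        (∀ τ ∈ Finset.Icc (t + 1 - s) t, v τ = false ∧ w τ = true) then
      GateState.YES
    else
      x t)

/-- Output of node `(i,j)` of the binary-tree network `Σ(m)` of classical
conditioning gates, given the snapshot `X` of the gate states (`X i j` is the
state of node `(i,j)`, indices 1-based) and the external input `U` (1-based
ports: `v₁ⱼ = U (2j-1)`, `w₁ⱼ = U (2j)`).  Layer `0` is, by convention, the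
external ports themselves: `netY X U 0 k = U k`. -/
def netY (X : ℕ → ℕ → GateState) (U : ℕ → Bool) : ℕ → ℕ → Bool
  | 0, j => U j
  | i + 1, j => gateOut (X (i + 1) j) (netY X U i (2 * j - 1)) (netY X U i (2 * j))

/-- First input `v_{ij}` of node `(i,j)`: the output of node `(i-1, 2j-1)`
(for `i = 1`, the external port `2j-1`). -/
def nodeV (X : ℕ → ℕ → GateState) (U : ℕ → Bool) (i j : ℕ) : Bool :=
  netY X U (i - 1) (2 * j - 1)

/-- Second input `w_{ij}` of node `(i,j)`: the output of node `(i-1, 2j)`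
(for `i = 1`, the external port `2j`). -/
def nodeW (X : ℕ → ℕ → GateState) (U : ℕ → Bool) (i j : ℕ) : Bool :=
  netY X U (i - 1) (2 * j)

open Classical in
/-- A trajectory of the network `Σ(m)` of classical conditioning gates, all with
unit training time `s`: `U t k` is the external input at time `t` on port `k`
(`k = 1, …, 2^m`), and `X t i j` is the state of node `(i,j)` at time `t`
(`i = 1, …, m`, `j = 1, …, 2^(m-i)`).  Every node obeys the state-update
equation of the classical conditioning gate, its inputs being delivered by the
outputs of the previous layer (resp. the external input, for layer 1). -/
def NetTraj (m s : ℕ) (U : ℕ → ℕ → Bool) (X : ℕ → ℕ → ℕ → GateState) : Prop :=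
  ∀ i j : ℕ, 1 ≤ i → i ≤ m → 1 ≤ j → j ≤ 2 ^ (m - i) →
    ∀ t : ℕ, X (t + 1) i j =
      if X (t + 1 - s) i j = GateState.YES ∧
          (∀ τ ∈ Finset.Icc (t + 1 - s) t,
            nodeV (X τ) (U τ) i j = true ∧ nodeW (X τ) (U τ) i j = true) then
        GateState.OR
      else if X (t + 1 - s) i j = GateState.OR ∧
          (∀ τ ∈ Finset.Icc (t + 1 - s) t,
            nodeV (X τ) (U τ) i j = false ∧ nodeW (X τ) (U τ) i j = true) then
        GateState.YES
      else
        X t i j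

/-- The flipped value of a gate state. -/
def flipState : GateState → GateState
  | GateState.YES => GateState.OR
  | GateState.OR  => GateState.YES

/-- The training input value `Û_{(p,q)}` for flipping node `(p,q)` whose current
state is `xpq`: the external input (1-based ports `1, …, 2^m`) is divided into
`2^(m+1-p)` consecutive blocks of equal size `2^(p-1)`; block `2q-1` is
`(0,…,0)` if `xpq = OR` and `(1,0,…,0)` if `xpq = YES`, block `2q` is
`(1,0,…,0)`, and all other blocks are `(0,…,0)`. -/
def Uhat (p q : ℕ) (xpq : GateState) (k : ℕ) : Bool :=
  if (k - 1) / 2 ^ (p - 1) + 1 = 2 * q - 1 then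
    decide (xpq = GateState.YES) && decide ((k - 1) % 2 ^ (p - 1) = 0)
  else if (k - 1) / 2 ^ (p - 1) + 1 = 2 * q then
    decide ((k - 1) % 2 ^ (p - 1) = 0)
  else
    false


lemma netY_left_one (X : ℕ → ℕ → GateState) (U : ℕ → Bool) (hU : U 1 = true) :
    ∀ i : ℕ, netY X U i 1 = true := by
  intro i
  induction i with
  | zero => simpa [netY] using hU
  | succ i ih =>
      show gateOut (X (i + 1) 1) (netY X U i (2 * 1 - 1)) (netY X U i (2 * 1)) = true
      have h1 : (2 * 1 - 1 : ℕ) = 1 := rfl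
      rw [h1, ih]
      cases X (i + 1) 1 <;> simp [gateOut]

/-- Lemma 2(ii): for the network `Σ(m)` with arbitrary state
`X̄`, if the network output equals `(⋁_{j∈J₁} v₁ⱼ) ∨ (⋁_{j∈J₂} w₁ⱼ)` for every
external input, then `1 ∈ J₁`; moreover, for every external input with
`v₁₁ = 1` the output equals `1`. -/
theorem stmt3 (m : ℕ) (hm : 1 ≤ m) (X : ℕ → ℕ → GateState)
    (J₁ J₂ : Finset ℕ)
    (hJ₁ : J₁ ⊆ Finset.Icc 1 (2 ^ (m - 1))) (hJ₂ : J₂ ⊆ Finset.Icc 1 (2 ^ (m - 1)))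
    (h : ∀ U : ℕ → Bool,
      netY X U m 1 =
        ((J₁.sup fun j => U (2 * j - 1)) || (J₂.sup fun j => U (2 * j)))) :
    1 ∈ J₁ ∧ ∀ U : ℕ → Bool, U 1 = true → netY X U m 1 = true := by
  constructor
  · set U : ℕ → Bool := fun k => decide (k = 1) with hUdef
    have hU1 : U 1 = true := by simp [hUdef]
    have hout : netY X U m 1 = true := netY_left_one X U hU1 m
    have heq := h U
    rw [hout] at heq
    have heq' := heq.symm
    rcases Bool.or_eq_true_iff.mp heq' with h1 | h2
    · -- some j ∈ J₁ with U (2j-1) = true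
      have : ¬ (J₁.sup fun j => U (2 * j - 1)) = ⊥ := by
        rw [h1]; simp
      rw [Finset.sup_eq_bot_iff] at this
      push_neg at this
      obtain ⟨j, hj, hjne⟩ := this
      have hjt : U (2 * j - 1) = true := by
        cases hb : U (2 * j - 1) with
        | false => exact absurd hb hjne
        | true => rfl
      have hjv : 2 * j - 1 = 1 := by simpa [hUdef] using hjt
      have hj1 : 1 ≤ j := (Finset.mem_Icc.mp (hJ₁ hj)).1
      have : j = 1 := by omega
      rwa [this] at hj
    · exfalso
      have : ¬ (J₂.sup fun j => U (2 * j)) = ⊥ := by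
        rw [h2]; simp
      rw [Finset.sup_eq_bot_iff] at this
      push_neg at this
      obtain ⟨j, hj, hjne⟩ := this
      have hjt : U (2 * j) = true := by
        cases hb : U (2 * j) with
        | false => exact absurd hb hjne
        | true => rfl
      have hjv : 2 * j = 1 := by simpa [hUdef] using hjt
      have hj1 : 1 ≤ j := (Finset.mem_Icc.mp (hJ₂ hj)).1
      omega
  · intro U hU
    exact netY_left_one X U hU m
end

section
/- Consider the network Σ(m) of classical conditioning gates with unit training time s and state X(t) = X̄ at an arbitrary time t, where X̄ ∈ {YES, OR}^n is arbitrary. If the external input is U(t) = (1,0,0,...,0) ∈ {0,1}^{2n₁} (first component 1, all others 0), then the network output satisfies y_m(t) = 1 and the state satisfies X(t+1) = X(t). -/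
lemma netY_eq6 (m : ℕ) (X : ℕ → ℕ → GateState) (U : ℕ → Bool)
    (hU1 : U 1 = true) (hU : ∀ k, 2 ≤ k → k ≤ 2 ^ m → U k = false) :
    ∀ i, i ≤ m → ∀ j, 1 ≤ j → j ≤ 2 ^ (m - i) →
      netY X U i j = decide (j = 1) := by
  intro i
  induction i with
  | zero =>
    intro _ j hj1 hj2
    rcases eq_or_lt_of_le hj1 with h | h
    · simp [netY, ← h, hU1]
    · have : U j = false := hU j h (by simpa using hj2)
      simp [netY, this]
      omega
  | succ i ih =>
    intro hi j hj1 hj2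
    have hpow : 2 ^ (m - i) = 2 ^ (m - (i + 1)) * 2 := by
      rw [← pow_succ]
      congr 1
      omega
    have h1 : netY X U i (2 * j - 1) = decide (2 * j - 1 = 1) :=
      ih (by omega) _ (by omega) (by omega)
    have h2 : netY X U i (2 * j) = decide (2 * j = 1) :=
      ih (by omega) _ (by omega) (by omega)
    have e1 : (decide (2 * j - 1 = 1) : Bool) = decide (j = 1) := by
      by_cases h : j = 1 <;> simp [h] <;> omega
    have e2 : (decide (2 * j = 1) : Bool) = false := by
      simp
    show gateOut (X (i + 1) j) (netY X U i (2 * j - 1)) (netY X U i (2 * j)) = _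
    rw [h1, h2, e1, e2]
    cases X (i + 1) j <;> simp [gateOut]

/-- Lemma 4(ii): for the network `Σ(m)` with unit training
time `s ≥ 1` and arbitrary state at an arbitrary time `t`, if the external
input at time `t` is `(1,0,…,0)` (first port `1`, all other ports `0`), then
the network output at time `t` is `1` and `X(t+1) = X(t)`. -/
theorem stmt6 (m s : ℕ) (hm : 1 ≤ m) (hs : 1 ≤ s)
    (U : ℕ → ℕ → Bool) (X : ℕ → ℕ → ℕ → GateState)
    (hnet : NetTraj m s U X) (t : ℕ)
    (hU1 : U t 1 = true)
    (hU : ∀ k : ℕ, 2 ≤ k → k ≤ 2 ^ m → U t k = false) :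
    netY (X t) (U t) m 1 = true ∧
    ∀ i j : ℕ, 1 ≤ i → i ≤ m → 1 ≤ j → j ≤ 2 ^ (m - i) →
      X (t + 1) i j = X t i j := by
  have key := netY_eq6 m (X t) (U t) hU1 (fun k hk1 hk2 => hU k hk1 hk2)
  constructor
  · have := key m le_rfl 1 le_rfl (by simp)
    simpa using this
  · intro i j hi1 hi2 hj1 hj2
    have hW : nodeW (X t) (U t) i j = false := by
      have : netY (X t) (U t) (i - 1) (2 * j) = decide (2 * j = 1) := by
        apply key (i - 1) (by omega) (2 * j) (by omega)
        have hpow : 2 ^ (m - (i - 1)) = 2 ^ (m - i) * 2 := by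
          rw [← pow_succ]; congr 1; omega
        omega
      rw [nodeW, this]
      simp
    have ht : t ∈ Finset.Icc (t + 1 - s) t := by
      simp [Finset.mem_Icc]; omega
    have hupd := hnet i j hi1 hi2 hj1 hj2 t
    rw [if_neg, if_neg] at hupd
    · exact hupd
    · rintro ⟨-, h⟩
      have := (h t ht).2
      rw [hW] at this
      exact absurd this (by simp)
    · rintro ⟨-, h⟩
      have := (h t ht).2
      rw [hW] at this
      exact absurd this (by simp)
end

section
/- Consider the network Σ(m) of classical conditioning gates with unit training time s and arbitrary initial state X(t) = X̄ ∈ {YES, OR}^n. If an input sequence (U(t), U(t+1), ..., U(t+T−1)) takes at each time only the values (0,0,...,0) ∈ {0,1}^{2n₁} or (1,0,...,0) ∈ {0,1}^{2n₁}, then the state of the network does not change: X(t+T) = X(t). -/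
lemma netY_false (U : ℕ → Bool) (X : ℕ → ℕ → GateState) :
    ∀ l k : ℕ, 1 ≤ k →
      (∀ p : ℕ, (k - 1) * 2 ^ l + 1 ≤ p → p ≤ k * 2 ^ l → U p = false) →
      netY X U l k = false := by
  intro l
  induction l with
  | zero =>
    intro k hk h
    simpa [netY] using h k (by omega) (by omega)
  | succ l ih =>
    intro k hk h
    have e1 : (2 * k - 1 - 1) * 2 ^ l = (k - 1) * 2 ^ (l + 1) := by
      rw [show 2 * k - 1 - 1 = 2 * (k - 1) by omega, pow_succ]; ring
    have e2 : (2 * k - 1) * 2 ^ l ≤ k * 2 ^ (l + 1) := by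
      rw [pow_succ]
      calc (2 * k - 1) * 2 ^ l ≤ (2 * k) * 2 ^ l :=
            Nat.mul_le_mul_right _ (by omega)
        _ = k * (2 ^ l * 2) := by ring
    have e3 : (k - 1) * 2 ^ (l + 1) + 1 ≤ (2 * k - 1) * 2 ^ l + 1 := by
      rw [← e1]
      have : (2 * k - 1 - 1) * 2 ^ l ≤ (2 * k - 1) * 2 ^ l :=
        Nat.mul_le_mul_right _ (by omega)
      omega
    have e4 : (2 * k) * 2 ^ l = k * 2 ^ (l + 1) := by rw [pow_succ]; ring
    have h1 : netY X U l (2 * k - 1) = false := by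
      apply ih (2 * k - 1) (by omega)
      intro p hp1 hp2
      exact h p (by rw [← e1]; omega) (le_trans hp2 e2)
    have h2 : netY X U l (2 * k) = false := by
      apply ih (2 * k) (by omega)
      intro p hp1 hp2
      exact h p (le_trans e3 hp1) (by rw [← e4]; omega)
    show gateOut (X (l + 1) k) (netY X U l (2 * k - 1)) (netY X U l (2 * k)) = false
    rw [h1, h2]
    cases X (l + 1) k <;> rfl

/-- for the network `Σ(m)` with unit training time `s ≥ 1` and
arbitrary state at an arbitrary time `t`, if the external input at each time
`τ ∈ {t, …, t+T-1}` takes only the values `(0,0,…,0)` or `(1,0,…,0)`, then the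
state of the network does not change: `X(t+T) = X(t)`. -/
theorem stmt7 (m s : ℕ) (hm : 1 ≤ m) (hs : 1 ≤ s)
    (U : ℕ → ℕ → Bool) (X : ℕ → ℕ → ℕ → GateState)
    (hnet : NetTraj m s U X) (t T : ℕ)
    (hU : ∀ τ : ℕ, t ≤ τ → τ < t + T →
      (∀ k : ℕ, 1 ≤ k → k ≤ 2 ^ m → U τ k = false) ∨
      (U τ 1 = true ∧ ∀ k : ℕ, 2 ≤ k → k ≤ 2 ^ m → U τ k = false)) :
    ∀ i j : ℕ, 1 ≤ i → i ≤ m → 1 ≤ j → j ≤ 2 ^ (m - i) →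
      X (t + T) i j = X t i j := by
  have hW : ∀ τ : ℕ, t ≤ τ → τ < t + T → ∀ i j : ℕ,
      1 ≤ i → i ≤ m → 1 ≤ j → j ≤ 2 ^ (m - i) →
      nodeW (X τ) (U τ) i j = false := by
    intro τ hτ1 hτ2 i j hi1 hi2 hj1 hj2
    show netY (X τ) (U τ) (i - 1) (2 * j) = false
    apply netY_false _ _ (i - 1) (2 * j) (by omega)
    intro p hp1 hp2
    have hpow : 1 ≤ 2 ^ (i - 1) := Nat.one_le_two_pow
    have hlow : 2 ≤ p := by
      have : 1 * 1 ≤ (2 * j - 1) * 2 ^ (i - 1) :=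
        Nat.mul_le_mul (by omega) hpow
      omega
    have hhigh : p ≤ 2 ^ m := by
      have h1 : (2 * j) * 2 ^ (i - 1) ≤ (2 * 2 ^ (m - i)) * 2 ^ (i - 1) :=
        Nat.mul_le_mul_right _ (by omega)
      have h2 : (2 * 2 ^ (m - i)) * 2 ^ (i - 1) = 2 ^ m := by
        rw [show (2 : ℕ) * 2 ^ (m - i) = 2 ^ (m - i + 1) by rw [pow_succ]; ring,
          ← pow_add]
        congr 1
        omega
      omega
    rcases hU τ hτ1 hτ2 with h | h
    · exact h p (by omega) hhigh
    · exact h.2 p hlow hhigh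
  have step : ∀ t' : ℕ, t ≤ t' → t' < t + T → ∀ i j : ℕ,
      1 ≤ i → i ≤ m → 1 ≤ j → j ≤ 2 ^ (m - i) →
      X (t' + 1) i j = X t' i j := by
    intro t' h1 h2 i j hi1 hi2 hj1 hj2
    have hmem : t' ∈ Finset.Icc (t' + 1 - s) t' := by
      simp only [Finset.mem_Icc]; omega
    have hw := hW t' h1 h2 i j hi1 hi2 hj1 hj2
    rw [hnet i j hi1 hi2 hj1 hj2 t', if_neg, if_neg]
    · rintro ⟨-, h⟩
      have := (h t' hmem).2
      rw [hw] at this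
      exact Bool.false_ne_true this
    · rintro ⟨-, h⟩
      have := (h t' hmem).2
      rw [hw] at this
      exact Bool.false_ne_true this
  have main : ∀ T' : ℕ, T' ≤ T → ∀ i j : ℕ,
      1 ≤ i → i ≤ m → 1 ≤ j → j ≤ 2 ^ (m - i) →
      X (t + T') i j = X t i j := by
    intro T'
    induction T' with
    | zero => intro _ i j _ _ _ _; rfl
    | succ n ih =>
      intro hn i j hi1 hi2 hj1 hj2
      rw [show t + (n + 1) = (t + n) + 1 from rfl,
        step (t + n) (by omega) (by omega) i j hi1 hi2 hj1 hj2,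
        ih (by omega) i j hi1 hi2 hj1 hj2]
  exact main T le_rfl
end

section
/- Consider the network Σ(m) of classical conditioning gates with unit training time s, state X(t) = X̄ at an arbitrary time t with X̄ ∈ {YES, OR}^n arbitrary, and a node (p,q). Then there exists an input sequence (U_t, U_{t+1}, ..., U_{t+s−1}), each term in {0,1}^{2n₁}, such that applying U(τ) = U_τ for τ = t, ..., t+s−1 yields x_{pq}(t+s) = x̄_{pq}(t) (the flipped value of x_{pq}(t)) and x_{ij}(t+s) = x_{ij}(t) for every node (i,j) in layer p other than (p,q). -/
/-- If all entries of the block of ports feeding node `(i,k)` except possibly the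
first one are `false`, then the output of the subtree equals the first entry,
regardless of the gate states. -/
lemma netY_pulse (X : ℕ → ℕ → GateState) (U : ℕ → Bool) :
    ∀ i k : ℕ, 1 ≤ k →
    (∀ r : ℕ, 1 ≤ r → r < 2 ^ i → U (2 ^ i * (k - 1) + 1 + r) = false) →
    netY X U i k = U (2 ^ i * (k - 1) + 1) := by
  intro i
  induction i with
  | zero =>
    intro k hk _
    show U k = U (2 ^ 0 * (k - 1) + 1)
    congr 1
    omega
  | succ i ih =>
    intro k hk h0
    have ha : 1 ≤ 2 ^ i := Nat.one_le_two_pow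
    have hpow : 2 ^ (i + 1) = 2 ^ i * 2 := pow_succ 2 i
    have e1 : 2 * k - 1 - 1 = 2 * (k - 1) := by omega
    have e2 : 2 ^ i * (2 * (k - 1)) = 2 ^ (i + 1) * (k - 1) := by
      rw [hpow]; ring
    have e3 : 2 * k - 1 = 2 * (k - 1) + 1 := by omega
    have e4 : 2 ^ i * (2 * (k - 1) + 1) = 2 ^ (i + 1) * (k - 1) + 2 ^ i := by
      rw [hpow]; ring
    have hv : netY X U i (2 * k - 1) = U (2 ^ (i + 1) * (k - 1) + 1) := by
      rw [ih (2 * k - 1) (by omega) ?_]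
      · rw [e1, e2]
      · intro r hr1 hr2
        rw [e1, show 2 ^ i * (2 * (k - 1)) + 1 + r = 2 ^ (i + 1) * (k - 1) + 1 + r by
          rw [e2]]
        exact h0 r hr1 (by omega)
    have hw : netY X U i (2 * k) = false := by
      rw [ih (2 * k) (by omega) ?_]
      · rw [show 2 * k - 1 = 2 * (k - 1) + 1 by omega, e4,
          show 2 ^ (i + 1) * (k - 1) + 2 ^ i + 1 = 2 ^ (i + 1) * (k - 1) + 1 + 2 ^ i by omega]
        exact h0 (2 ^ i) ha (by omega)
      · intro r hr1 hr2
        rw [show 2 * k - 1 = 2 * (k - 1) + 1 by omega, e4,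
          show 2 ^ (i + 1) * (k - 1) + 2 ^ i + 1 + r
            = 2 ^ (i + 1) * (k - 1) + 1 + (2 ^ i + r) by omega]
        exact h0 (2 ^ i + r) (by omega) (by omega)
    show gateOut (X (i + 1) k) (netY X U i (2 * k - 1)) (netY X U i (2 * k)) = _
    rw [hv, hw]
    cases X (i + 1) k <;> simp [gateOut]

/-- Evaluation of the training input `Û` on the `r`-th entry of block `b`. -/
lemma uhat_eval (p q b r : ℕ) (hp : 1 ≤ p) (hb : 1 ≤ b) (hr : r < 2 ^ (p - 1))
    (xpq : GateState) :
    Uhat p q xpq (2 ^ (p - 1) * (b - 1) + 1 + r) =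
      (if b = 2 * q - 1 then decide (xpq = GateState.YES) && decide (r = 0)
       else if b = 2 * q then decide (r = 0) else false) := by
  unfold Uhat
  have h1 : 2 ^ (p - 1) * (b - 1) + 1 + r - 1 = 2 ^ (p - 1) * (b - 1) + r := by omega
  rw [h1]
  have hd : (2 ^ (p - 1) * (b - 1) + r) / 2 ^ (p - 1) = b - 1 := by
    rw [Nat.mul_add_div (Nat.pos_of_ne_zero (by positivity)), Nat.div_eq_of_lt hr,
      Nat.add_zero]
  have hm : (2 ^ (p - 1) * (b - 1) + r) % 2 ^ (p - 1) = r := by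
    rw [Nat.mul_add_mod]
    exact Nat.mod_eq_of_lt hr
  rw [hd, hm]
  have hb1 : b - 1 + 1 = b := by omega
  rw [hb1]

/-- Theorem 1(i), the flipping principle: for the network
`Σ(m)` with unit training time `s ≥ 1`, arbitrary state `X̄` at an arbitrary
time `t`, and any node `(p,q)`, there exists an input sequence
`(U_t, …, U_{t+s-1})` (here `Useq r` is the input value applied at time `t+r`)
such that, for any network trajectory whose state at time `t` is `X̄` and whose
external input on `{t, …, t+s-1}` is this sequence, the state of node `(p,q)`
at time `t+s` is flipped while the state of every other node of layer `p` is
preserved. -/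
theorem stmt8 (m s : ℕ) (hm : 1 ≤ m) (hs : 1 ≤ s) (p q : ℕ)
    (hp : 1 ≤ p) (hpm : p ≤ m) (hq : 1 ≤ q) (hqn : q ≤ 2 ^ (m - p))
    (Xbar : ℕ → ℕ → GateState) (t : ℕ) :
    ∃ Useq : ℕ → ℕ → Bool,
      ∀ (U : ℕ → ℕ → Bool) (X : ℕ → ℕ → ℕ → GateState),
        NetTraj m s U X →
        (∀ i j : ℕ, 1 ≤ i → i ≤ m → 1 ≤ j → j ≤ 2 ^ (m - i) → X t i j = Xbar i j) →
        (∀ r : ℕ, r < s → ∀ k : ℕ, 1 ≤ k → k ≤ 2 ^ m → U (t + r) k = Useq r k) →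
        X (t + s) p q = flipState (X t p q) ∧
        ∀ j : ℕ, 1 ≤ j → j ≤ 2 ^ (m - p) → j ≠ q → X (t + s) p j = X t p j := by
  refine ⟨fun _ k => Uhat p q (Xbar p q) k, ?_⟩
  intro U X htraj hX0 hU
  have ha : 1 ≤ 2 ^ (p - 1) := Nat.one_le_two_pow
  have hpow : 2 ^ (p - 1) * 2 ^ (m - p + 1) = 2 ^ m := by
    rw [← pow_add]; congr 1; omega
  have hdbl : 2 ^ (m - p + 1) = 2 * 2 ^ (m - p) := by
    rw [pow_succ]; ring
  -- output of the subtree feeding block `b`, at any time in the training window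
  have hblock : ∀ τ, t ≤ τ → τ ≤ t + s - 1 → ∀ b, 1 ≤ b → b ≤ 2 ^ (m - p + 1) →
      netY (X τ) (U τ) (p - 1) b =
      (if b = 2 * q - 1 then decide (Xbar p q = GateState.YES)
       else if b = 2 * q then true else false) := by
    intro τ hτ1 hτ2 b hb1 hb2
    have hmulb : 2 ^ (p - 1) * (b - 1) + 2 ^ (p - 1) = 2 ^ (p - 1) * b := by
      rw [← Nat.mul_succ]; congr 1; omega
    have hmb : 2 ^ (p - 1) * b ≤ 2 ^ m := by
      calc 2 ^ (p - 1) * b ≤ 2 ^ (p - 1) * 2 ^ (m - p + 1) :=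
            Nat.mul_le_mul_left _ hb2
        _ = 2 ^ m := hpow
    have hUeq : ∀ r, r < 2 ^ (p - 1) →
        U τ (2 ^ (p - 1) * (b - 1) + 1 + r)
          = Uhat p q (Xbar p q) (2 ^ (p - 1) * (b - 1) + 1 + r) := by
      intro r hr
      have hτt : τ = t + (τ - t) := by omega
      rw [hτt]
      exact hU (τ - t) (by omega) _ (by omega) (by omega)
    rw [netY_pulse (X τ) (U τ) (p - 1) b hb1 ?_]
    · rw [show 2 ^ (p - 1) * (b - 1) + 1 = 2 ^ (p - 1) * (b - 1) + 1 + 0 by omega,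
        hUeq 0 (by omega), uhat_eval p q b 0 hp hb1 (by omega)]
      simp
    · intro r hr1 hr2
      rw [hUeq r hr2, uhat_eval p q b r hp hb1 hr2,
        show decide (r = 0) = false from decide_eq_false (by omega)]
      split <;> simp
  -- the two inputs of every node of layer p, at any time in the training window
  have hVW : ∀ τ, t ≤ τ → τ ≤ t + s - 1 → ∀ j, 1 ≤ j → j ≤ 2 ^ (m - p) →
      nodeV (X τ) (U τ) p j = (if j = q then decide (Xbar p q = GateState.YES) else false) ∧
      nodeW (X τ) (U τ) p j = (if j = q then true else false) := by
    intro τ h1 h2 j hj1 hj2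
    constructor
    · show netY (X τ) (U τ) (p - 1) (2 * j - 1) = _
      rw [hblock τ h1 h2 (2 * j - 1) (by omega) (by omega)]
      by_cases hjq : j = q
      · subst hjq; rw [if_pos rfl, if_pos rfl]
      · rw [if_neg (by omega), if_neg (by omega), if_neg hjq]
    · show netY (X τ) (U τ) (p - 1) (2 * j) = _
      rw [hblock τ h1 h2 (2 * j) (by omega) (by omega)]
      by_cases hjq : j = q
      · subst hjq; rw [if_neg (by omega), if_pos rfl, if_pos rfl]
      · rw [if_neg (by omega), if_neg (by omega), if_neg hjq]
  -- preservation of the other nodes of layer p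
  have hpres : ∀ j, 1 ≤ j → j ≤ 2 ^ (m - p) → j ≠ q → ∀ r, r ≤ s →
      X (t + r) p j = X t p j := by
    intro j hj1 hj2 hjq r
    induction r with
    | zero => intro _; rfl
    | succ r ih =>
      intro hr
      have ihr := ih (by omega)
      have ht := htraj p j hp hpm hj1 hj2 (t + r)
      have hwfalse : nodeW (X (t + r)) (U (t + r)) p j = false := by
        rw [(hVW (t + r) (by omega) (by omega) j hj1 hj2).2, if_neg hjq]
      have hmem : t + r ∈ Finset.Icc (t + r + 1 - s) (t + r) := by
        simp [Finset.mem_Icc]; omega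
      show X (t + r + 1) p j = X t p j
      rw [ht, if_neg, if_neg]
      · exact ihr
      · rintro ⟨-, hall⟩
        have h := (hall (t + r) hmem).2
        rw [hwfalse] at h
        exact Bool.false_ne_true h
      · rintro ⟨-, hall⟩
        have h := (hall (t + r) hmem).2
        rw [hwfalse] at h
        exact Bool.false_ne_true h
  -- flipping of node (p,q)
  have hXt : X t p q = Xbar p q := hX0 p q hp hpm hq hqn
  have hmain : X (t + s) p q = flipState (X t p q) := by
    have ht := htraj p q hp hpm hq hqn (t + s - 1)
    have e1 : t + s - 1 + 1 = t + s := by omega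
    have e2 : t + s - s = t := by omega
    rw [e1, e2] at ht
    have hvw : ∀ τ ∈ Finset.Icc t (t + s - 1),
        nodeV (X τ) (U τ) p q = decide (Xbar p q = GateState.YES) ∧
        nodeW (X τ) (U τ) p q = true := by
      intro τ hτ
      simp only [Finset.mem_Icc] at hτ
      have h := hVW τ hτ.1 hτ.2 q hq hqn
      exact ⟨by rw [h.1, if_pos rfl], by rw [h.2, if_pos rfl]⟩
    rw [ht]
    cases hXbar : Xbar p q with
    | YES =>
      rw [if_pos]
      · rw [hXt, hXbar]; rfl
      · refine ⟨by rw [hXt, hXbar], fun τ hτ => ?_⟩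
        have h := hvw τ hτ
        rw [hXbar] at h
        exact ⟨by rw [h.1]; rfl, h.2⟩
    | OR =>
      rw [if_neg, if_pos]
      · rw [hXt, hXbar]; rfl
      · refine ⟨by rw [hXt, hXbar], fun τ hτ => ?_⟩
        have h := hvw τ hτ
        rw [hXbar] at h
        exact ⟨by rw [h.1]; rfl, h.2⟩
      · rintro ⟨hy, -⟩
        rw [hXt, hXbar] at hy
        exact GateState.noConfusion hy
  exact ⟨hmain, fun j hj1 hj2 hjq => hpres j hj1 hj2 hjq s le_rfl⟩
end

section
/- Consider the network Σ(m) of classical conditioning gates with unit training time s, state X(t) = X̄ at an arbitrary time t with X̄ ∈ {YES, OR}^n arbitrary, and a node (p,q). Define the input value Û_{(p,q)} ∈ {0,1}^{2n₁} by dividing it into 2^{m+1−p} consecutive blocks of equal size 2^{p−1}, where block 2q−1 equals (0,0,...,0) if x_{pq}(t) = OR and (1,0,...,0) if x_{pq}(t) = YES, block 2q equals (1,0,...,0), and all other blocks equal (0,0,...,0). Then applying the constant input sequence U(τ) = Û_{(p,q)} for τ = t, t+1, ..., t+s−1 yields x_{pq}(t+s) = x̄_{pq}(t) (the flipped value of x_{pq}(t))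 and x_{ij}(t+s) = x_{ij}(t) for every node (i,j) in layer p other than (p,q). -/
/-!
A gate receiving `w = 0` outputs its first input `v`, whatever its state, and is never trained.
In `Û_{(p,q)}` only the first port of each block of size `2^(p-1)` can be `1`, so the subtree
below each node of layer `p - 1` just forwards the first port of its block. Hence node `(p,q)`
sees the constant input `(1,1)` if it is in state YES and `(0,1)` if it is in state OR, which
trains it to the flipped state after `s` steps, while every other node of layer `p` sees `w = 0`.
-/

lemma gateOut_false_right (x : GateState) (v : Bool) : gateOut x v false = v := by
  cases x <;> simp [gateOut]

/-- Blocks are 0-based here: block `j` of size `2^i` is the set of ports `j * 2^i + r + 1`,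
`r < 2^i`, and it feeds node `(i, j + 1)`. -/
lemma netY_eq_of_block_tail_false (X : ℕ → ℕ → GateState) (U : ℕ → Bool) (i j : ℕ)
    (htail : ∀ r, 0 < r → r < 2 ^ i → U (j * 2 ^ i + r + 1) = false) :
    netY X U i (j + 1) = U (j * 2 ^ i + 1) := by
  induction i generalizing j with
  | zero => simp [netY]
  | succ i ih =>
    have hpow : 2 ^ (i + 1) = 2 ^ i + 2 ^ i := by ring
    have hpos : 0 < 2 ^ i := Nat.two_pow_pos i
    have hleft : netY X U i (2 * j + 1) = U (j * 2 ^ (i + 1) + 1) := by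
      rw [ih (2 * j) fun r hr hr' => ?_]
      · congr 1; ring
      · convert htail r hr (by omega) using 3; ring
    have hright : netY X U i (2 * j + 1 + 1) = false := by
      rw [ih (2 * j + 1) fun r hr hr' => ?_]
      · convert htail (2 ^ i) hpos (by omega) using 3; ring
      · convert htail (2 ^ i + r) (by omega) (by omega) using 3; ring
    rw [netY, show 2 * (j + 1) - 1 = 2 * j + 1 by omega, show 2 * (j + 1) = 2 * j + 1 + 1 by ring,
      hleft, hright, gateOut_false_right]

lemma Uhat_block (p q : ℕ) (x : GateState) (b : ℕ) {r : ℕ} (hr : r < 2 ^ (p - 1)) :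
    Uhat p q x (b * 2 ^ (p - 1) + r + 1) =
      (decide (r = 0) &&
        if b + 1 = 2 * q - 1 then decide (x = GateState.YES) else decide (b + 1 = 2 * q)) := by
  have hdiv : (b * 2 ^ (p - 1) + r) / 2 ^ (p - 1) = b := by
    rw [Nat.add_comm, Nat.add_mul_div_right _ _ (Nat.two_pow_pos _), Nat.div_eq_of_lt hr,
      Nat.zero_add]
  have hmod : (b * 2 ^ (p - 1) + r) % 2 ^ (p - 1) = r := by
    rw [Nat.add_comm, Nat.add_mul_mod_self_right, Nat.mod_eq_of_lt hr]
  unfold Uhat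
  rw [Nat.add_sub_cancel, hdiv, hmod]
  split_ifs <;> simp_all [Bool.and_comm]

lemma nodeInputs_of_eq_Uhat {m p q : ℕ} (hp : 1 ≤ p) (hpm : p ≤ m) {x : GateState}
    {X : ℕ → ℕ → GateState} {U : ℕ → Bool}
    (hU : ∀ k, 1 ≤ k → k ≤ 2 ^ m → U k = Uhat p q x k)
    {j : ℕ} (hj : 1 ≤ j) (hjn : j ≤ 2 ^ (m - p)) :
    nodeV X U p j = (decide (j = q) && decide (x = GateState.YES)) ∧
      nodeW X U p j = decide (j = q) := by
  obtain ⟨j, rfl⟩ : ∃ j', j = j' + 1 := ⟨j - 1, by omega⟩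
  have hsize : (j + 1) * 2 ^ (p - 1) * 2 ≤ 2 ^ m := by
    calc (j + 1) * 2 ^ (p - 1) * 2 ≤ 2 ^ (m - p) * 2 ^ (p - 1) * 2 := by gcongr
      _ = 2 ^ m := by rw [← pow_add, ← pow_succ]; congr 1; omega
  have hpos : 0 < 2 ^ (p - 1) := Nat.two_pow_pos _
  have hblock : ∀ b, b + 1 ≤ 2 * j + 2 →
      netY X U (p - 1) (b + 1) = Uhat p q x (b * 2 ^ (p - 1) + 0 + 1) := by
    intro b hb
    have hend : (b + 1) * 2 ^ (p - 1) ≤ 2 ^ m :=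
      le_trans (by gcongr) (by linarith : (2 * j + 2) * 2 ^ (p - 1) ≤ 2 ^ m)
    rw [netY_eq_of_block_tail_false X U _ b fun r hr hr' => ?_]
    · exact hU _ (by omega) (by nlinarith)
    · rw [hU _ (by omega) (by nlinarith), Uhat_block p q x b hr']
      simp [hr.ne']
  rw [nodeV, nodeW, show 2 * (j + 1) - 1 = 2 * j + 1 by omega,
    show 2 * (j + 1) = 2 * j + 1 + 1 by ring, hblock _ (by omega), hblock _ (by omega),
    Uhat_block p q x _ hpos, Uhat_block p q x _ hpos]
  by_cases hjq : j + 1 = q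
  · subst hjq
    simp [show 2 * (j + 1) = 2 * j + 1 + 1 by ring]
  · simp [hjq, show 2 * j + 1 ≠ 2 * q - 1 by omega, show 2 * j + 1 ≠ 2 * q by omega,
      show 2 * j + 1 + 1 ≠ 2 * q - 1 by omega, show 2 * j + 1 + 1 ≠ 2 * q by omega]

namespace NetTraj

variable {m s : ℕ} {U : ℕ → ℕ → Bool} {X : ℕ → ℕ → ℕ → GateState} {i j : ℕ}

lemma eq_flipState_of_training (hnet : NetTraj m s U X) (hs : 1 ≤ s)
    (hi : 1 ≤ i) (him : i ≤ m) (hj : 1 ≤ j) (hjn : j ≤ 2 ^ (m - i)) {t : ℕ}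
    (hin : ∀ τ, t ≤ τ → τ < t + s →
      nodeV (X τ) (U τ) i j = decide (X t i j = GateState.YES) ∧
        nodeW (X τ) (U τ) i j = true) :
    X (t + s) i j = flipState (X t i j) := by
  obtain ⟨s, rfl⟩ : ∃ s', s = s' + 1 := ⟨s - 1, by omega⟩
  have hwindow : ∀ τ ∈ Finset.Icc t (t + s),
      nodeV (X τ) (U τ) i j = decide (X t i j = GateState.YES) ∧
        nodeW (X τ) (U τ) i j = true := fun τ hτ =>
    hin τ (Finset.mem_Icc.1 hτ).1 (by have := (Finset.mem_Icc.1 hτ).2; omega)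
  rw [← Nat.add_assoc, hnet i j hi him hj hjn, show t + s + 1 - (s + 1) = t by omega]
  cases hx : X t i j <;> simp_all [flipState]

lemma step_of_nodeW_false (hnet : NetTraj m s U X) (hs : 1 ≤ s)
    (hi : 1 ≤ i) (him : i ≤ m) (hj : 1 ≤ j) (hjn : j ≤ 2 ^ (m - i)) {τ : ℕ}
    (hw : nodeW (X τ) (U τ) i j = false) :
    X (τ + 1) i j = X τ i j := by
  have hmem : τ ∈ Finset.Icc (τ + 1 - s) τ := Finset.mem_Icc.2 ⟨by omega, le_rfl⟩
  rw [hnet i j hi him hj hjn, if_neg fun h => by simp [(h.2 τ hmem).2] at hw,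
    if_neg fun h => by simp [(h.2 τ hmem).2] at hw]

lemma eq_of_nodeW_false (hnet : NetTraj m s U X) (hs : 1 ≤ s)
    (hi : 1 ≤ i) (him : i ≤ m) (hj : 1 ≤ j) (hjn : j ≤ 2 ^ (m - i)) {t n : ℕ}
    (hw : ∀ τ, t ≤ τ → τ < t + n → nodeW (X τ) (U τ) i j = false) :
    X (t + n) i j = X t i j := by
  induction n with
  | zero => rfl
  | succ n ih =>
    rw [← Nat.add_assoc, hnet.step_of_nodeW_false hs hi him hj hjn (hw _ (by omega) (by omega)),
      ih fun τ h1 h2 => hw τ h1 (by omega)]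

end NetTraj

theorem stmt9_general (m s : ℕ) (hs : 1 ≤ s) (p q : ℕ)
    (hp : 1 ≤ p) (hpm : p ≤ m) (hq : 1 ≤ q) (hqn : q ≤ 2 ^ (m - p))
    (U : ℕ → ℕ → Bool) (X : ℕ → ℕ → ℕ → GateState)
    (hnet : NetTraj m s U X) (t : ℕ)
    (hU : ∀ r : ℕ, r < s → ∀ k : ℕ, 1 ≤ k → k ≤ 2 ^ m →
      U (t + r) k = Uhat p q (X t p q) k) :
    X (t + s) p q = flipState (X t p q) ∧
    ∀ j : ℕ, 1 ≤ j → j ≤ 2 ^ (m - p) → j ≠ q → X (t + s) p j = X t p j := by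
  have hin : ∀ τ, t ≤ τ → τ < t + s → ∀ j, 1 ≤ j → j ≤ 2 ^ (m - p) →
      nodeV (X τ) (U τ) p j = (decide (j = q) && decide (X t p q = GateState.YES)) ∧
        nodeW (X τ) (U τ) p j = decide (j = q) := by
    intro τ h1 h2 j hj hjn
    obtain ⟨r, rfl⟩ := Nat.exists_eq_add_of_le h1
    exact nodeInputs_of_eq_Uhat hp hpm (hU r (by omega)) hj hjn
  refine ⟨hnet.eq_flipState_of_training hs hp hpm hq hqn fun τ h1 h2 => ?_,
    fun j hj hjn hjq => hnet.eq_of_nodeW_false hs hp hpm hj hjn fun τ h1 h2 => ?_⟩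
  · simpa using hin τ h1 h2 q hq hqn
  · simpa [hjq] using (hin τ h1 h2 j hj hjn).2

/-- Theorem 1(ii): for the network `Σ(m)` with unit training
time `s ≥ 1`, arbitrary state at an arbitrary time `t`, and any node `(p,q)`,
applying the constant input sequence `U(τ) = Û_{(p,q)}` for
`τ = t, t+1, …, t+s-1` (where `Û_{(p,q)}` is defined from the state of node
`(p,q)` at time `t`) flips the state of node `(p,q)` at time `t+s` while
preserving the state of every other node of layer `p`. -/
theorem stmt9 (m s : ℕ) (hm : 1 ≤ m) (hs : 1 ≤ s) (p q : ℕ)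
    (hp : 1 ≤ p) (hpm : p ≤ m) (hq : 1 ≤ q) (hqn : q ≤ 2 ^ (m - p))
    (U : ℕ → ℕ → Bool) (X : ℕ → ℕ → ℕ → GateState)
    (hnet : NetTraj m s U X) (t : ℕ)
    (hU : ∀ r : ℕ, r < s → ∀ k : ℕ, 1 ≤ k → k ≤ 2 ^ m →
      U (t + r) k = Uhat p q (X t p q) k) :
    X (t + s) p q = flipState (X t p q) ∧
    ∀ j : ℕ, 1 ≤ j → j ≤ 2 ^ (m - p) → j ≠ q → X (t + s) p j = X t p j :=
  stmt9_general m s hs p q hp hpm hq hqn U X hnet t hU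
end

section
/- Consider the network Σ(m) of classical conditioning gates with unit training time s, state X(t) = X̄ with X̄ ∈ {YES, OR}^n arbitrary, and a node (p,q). If x_{pq}(t) = OR and the external input is U(t) = Û_{(p,q)}, then the inputs of the layer-p nodes satisfy (v_{pq}(t), w_{pq}(t)) = (0,1) and (v_{pj}(t), w_{pj}(t)) = (0,0) for every j ∈ {1,...,n_p} \ {q}; if instead x_{pq}(t) = YES, then (v_{pq}(t), w_{pq}(t)) = (1,1) and (v_{pj}(t), w_{pj}(t)) = (0,0) for every j ∈ {1,...,n_p} \ {q}. -/
/-!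
Node `(i, r)` of the tree computes a function of the `2^i` consecutive external
ports `2^i (r-1) + 1, …, 2^i r` only; since both gate functions map `(0,0)` to `0`
and pass the first input through, the node outputs `0` on an all-zero block and
`1` on any block whose first port is `1`. The input `Û_{(p,q)}` is, block by block
at layer `p - 1`, exactly of one of these two kinds.
-/

section Blocks

variable (X : ℕ → ℕ → GateState) (U : ℕ → Bool)

lemma netY_eq_false_of_block (i r : ℕ) (hr : 1 ≤ r)
    (h : ∀ o < 2 ^ i, U (2 ^ i * (r - 1) + 1 + o) = false) :
    netY X U i r = false := by
  induction i generalizing r with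
  | zero =>
    have h0 := h 0 one_pos
    rwa [pow_zero, one_mul, add_zero, Nat.sub_add_cancel hr] at h0
  | succ i ih =>
    have hleft : netY X U i (2 * r - 1) = false := ih _ (by omega) fun o ho => by
      have : 2 ^ i * (2 * r - 1 - 1) = 2 ^ (i + 1) * (r - 1) := by
        rw [show 2 * r - 1 - 1 = 2 * (r - 1) by omega, pow_succ]; ring
      rw [this]
      exact h o (by rw [pow_succ]; omega)
    have hright : netY X U i (2 * r) = false := ih _ (by omega) fun o ho => by
      have : 2 ^ i * (2 * r - 1) + 1 + o = 2 ^ (i + 1) * (r - 1) + 1 + (2 ^ i + o) := by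
        rw [show 2 * r - 1 = 2 * (r - 1) + 1 by omega, pow_succ]; ring
      rw [this]
      exact h _ (by rw [pow_succ]; omega)
    cases hx : X (i + 1) r <;> simp [netY, gateOut, hx, hleft, hright]

lemma netY_eq_true_of_first_port (i r : ℕ) (hr : 1 ≤ r)
    (h : U (2 ^ i * (r - 1) + 1) = true) :
    netY X U i r = true := by
  induction i generalizing r with
  | zero => rwa [pow_zero, one_mul, Nat.sub_add_cancel hr] at h
  | succ i ih =>
    have hleft : netY X U i (2 * r - 1) = true := ih _ (by omega) <| by
      rwa [show 2 * r - 1 - 1 = 2 * (r - 1) by omega, ← mul_assoc, ← pow_succ]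
    cases hx : X (i + 1) r <;> simp [netY, gateOut, hx, hleft]

end Blocks

lemma Uhat_block_port (p q r o : ℕ) (x : GateState) (hr : 1 ≤ r) (ho : o < 2 ^ (p - 1)) :
    Uhat p q x (2 ^ (p - 1) * (r - 1) + 1 + o) =
      if r = 2 * q - 1 then decide (x = GateState.YES) && decide (o = 0)
      else if r = 2 * q then decide (o = 0) else false := by
  have hpos : 0 < 2 ^ (p - 1) := Nat.pow_pos two_pos
  have hshift : 2 ^ (p - 1) * (r - 1) + 1 + o - 1 = 2 ^ (p - 1) * (r - 1) + o := by omega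
  have hdiv : (2 ^ (p - 1) * (r - 1) + o) / 2 ^ (p - 1) + 1 = r := by
    rw [Nat.mul_add_div hpos, Nat.div_eq_of_lt ho]; omega
  have hmod : (2 ^ (p - 1) * (r - 1) + o) % 2 ^ (p - 1) = o := by
    rw [Nat.mul_add_mod, Nat.mod_eq_of_lt ho]
  simp only [Uhat, hshift, hdiv, hmod]

lemma block_port_le_two_pow {m p r o : ℕ} (hp : 1 ≤ p) (hpm : p ≤ m) (hr : 1 ≤ r)
    (hrm : r ≤ 2 * 2 ^ (m - p)) (ho : o < 2 ^ (p - 1)) :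
    2 ^ (p - 1) * (r - 1) + 1 + o ≤ 2 ^ m :=
  calc 2 ^ (p - 1) * (r - 1) + 1 + o ≤ 2 ^ (p - 1) * (r - 1) + 2 ^ (p - 1) := by omega
    _ ≤ 2 ^ (p - 1) * r := by
      rw [← Nat.mul_add_one]; exact Nat.mul_le_mul_left _ (by omega)
    _ ≤ 2 ^ (p - 1) * 2 ^ (m - p + 1) := Nat.mul_le_mul_left _ (by rwa [pow_succ'])
    _ = 2 ^ m := by rw [← pow_add]; congr 1; omega

lemma netY_of_eq_Uhat {m p q : ℕ} (hp : 1 ≤ p) (hpm : p ≤ m)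
    (X : ℕ → ℕ → GateState) (U : ℕ → Bool)
    (hU : ∀ k : ℕ, 1 ≤ k → k ≤ 2 ^ m → U k = Uhat p q (X p q) k)
    (r : ℕ) (hr : 1 ≤ r) (hrm : r ≤ 2 * 2 ^ (m - p)) :
    netY X U (p - 1) r =
      if r = 2 * q - 1 then decide (X p q = GateState.YES)
      else if r = 2 * q then true else false := by
  have hport : ∀ o < 2 ^ (p - 1), U (2 ^ (p - 1) * (r - 1) + 1 + o) =
      if r = 2 * q - 1 then decide (X p q = GateState.YES) && decide (o = 0)
      else if r = 2 * q then decide (o = 0) else false := fun o ho => by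
    rw [hU _ (by omega) (block_port_le_two_pow hp hpm hr hrm ho), Uhat_block_port p q r o _ hr ho]
  have hfirst := hport 0 (Nat.pow_pos two_pos)
  rw [Nat.add_zero] at hfirst
  split_ifs with hodd heven
  · cases hx : X p q
    · exact netY_eq_true_of_first_port X U _ r hr (by rw [hfirst, if_pos hodd, hx]; rfl)
    · exact netY_eq_false_of_block X U _ r hr fun o ho => by rw [hport o ho, if_pos hodd, hx]; rfl
  · exact netY_eq_true_of_first_port X U _ r hr (by rw [hfirst, if_neg hodd, if_pos heven]; rfl)
  · exact netY_eq_false_of_block X U _ r hr fun o ho => by rw [hport o ho, if_neg hodd, if_neg heven]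

theorem stmt11_general (m p q : ℕ)
    (hp : 1 ≤ p) (hpm : p ≤ m) (hq : 1 ≤ q) (hqn : q ≤ 2 ^ (m - p))
    (X : ℕ → ℕ → GateState) (U : ℕ → Bool)
    (hU : ∀ k : ℕ, 1 ≤ k → k ≤ 2 ^ m → U k = Uhat p q (X p q) k) :
    (X p q = GateState.OR →
      nodeV X U p q = false ∧ nodeW X U p q = true) ∧
    (X p q = GateState.YES →
      nodeV X U p q = true ∧ nodeW X U p q = true) ∧
    (∀ j : ℕ, 1 ≤ j → j ≤ 2 ^ (m - p) → j ≠ q →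
      nodeV X U p j = false ∧ nodeW X U p j = false) := by
  have hlayer := netY_of_eq_Uhat hp hpm X U hU
  have hv : nodeV X U p q = decide (X p q = GateState.YES) := by
    rw [nodeV, hlayer _ (by omega) (by omega), if_pos rfl]
  have hw : nodeW X U p q = true := by
    rw [nodeW, hlayer _ (by omega) (by omega), if_neg (by omega), if_pos rfl]
  refine ⟨fun hx => ⟨by simp [hv, hx], hw⟩, fun hx => ⟨by simp [hv, hx], hw⟩,
    fun j hj hjn hjq => ⟨?_, ?_⟩⟩
  · rw [nodeV, hlayer _ (by omega) (by omega), if_neg (by omega), if_neg (by omega)]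
  · rw [nodeW, hlayer _ (by omega) (by omega), if_neg (by omega), if_neg (by omega)]

/-- for the network `Σ(m)` with arbitrary state `X̄` and any
node `(p,q)`, if the external input equals `Û_{(p,q)}` (defined from the state
`X̄ p q`), then the inputs of the layer-`p` nodes satisfy: if `X̄ p q = OR` then
`(v_{pq}, w_{pq}) = (0,1)`, if `X̄ p q = YES` then `(v_{pq}, w_{pq}) = (1,1)`,
and in both cases `(v_{pj}, w_{pj}) = (0,0)` for every `j ≠ q` in layer `p`. -/
theorem stmt11 (m p q : ℕ) (hm : 1 ≤ m)
    (hp : 1 ≤ p) (hpm : p ≤ m) (hq : 1 ≤ q) (hqn : q ≤ 2 ^ (m - p))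
    (X : ℕ → ℕ → GateState) (U : ℕ → Bool)
    (hU : ∀ k : ℕ, 1 ≤ k → k ≤ 2 ^ m → U k = Uhat p q (X p q) k) :
    (X p q = GateState.OR →
      nodeV X U p q = false ∧ nodeW X U p q = true) ∧
    (X p q = GateState.YES →
      nodeV X U p q = true ∧ nodeW X U p q = true) ∧
    (∀ j : ℕ, 1 ≤ j → j ≤ 2 ^ (m - p) → j ≠ q →
      nodeV X U p j = false ∧ nodeW X U p j = false) :=
  stmt11_general m p q hp hpm hq hqn X U hU
end

section
/- Consider the network Σ(m) of classical conditioning gates with unit training time s and arbitrary initial state X(0) = X̄ ∈ {YES, OR}^n. For every target state X* ∈ {YES, OR}^n there exist a time T ∈ {0, 1, ..., n·s} and an input sequence (U(0), U(1), ..., U(T−1)) with each U(t) ∈ {0,1}^{2n₁} such that X(T) = X*; that is, the state of the network can be steered from any value to any value. -/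
/-!
Training node `(p, q)` uses an input that is nonzero only at the leftmost ports of the
subtrees of its two children. The node then sees `(v, w) = (1, 1)` or `(0, 1)` for `s`
consecutive steps and ends in OR, resp. YES, whatever its state was, because under
`v = 1` a gate can only move to OR and under `v = 0` only to YES. Every other node in the
same or a lower layer sees `w = 0` and keeps its state. Training the nodes one at a time,
layer by layer from the inputs towards the root, therefore reaches `X*` at time `n·s`,
from any initial state and with an input sequence fixed in advance.
-/

def IsNode (m i j : ℕ) : Prop := 1 ≤ i ∧ i ≤ m ∧ 1 ≤ j ∧ j ≤ 2 ^ (m - i)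

lemma eq_add_of_forall_succ {α : Type*} {f : ℕ → α} {a : α} {t₀ d : ℕ} (h₀ : f t₀ = a)
    (hstep : ∀ τ, t₀ ≤ τ → τ < t₀ + d → f τ = a → f (τ + 1) = a) : f (t₀ + d) = a := by
  induction d with
  | zero => exact h₀
  | succ d ih =>
    exact hstep (t₀ + d) (by omega) (by omega) (ih fun τ h₁ h₂ => hstep τ h₁ (by omega))

namespace GateTraj

variable {s : ℕ} {v w : ℕ → Bool} {x : ℕ → GateState} {y : ℕ → Bool}

lemma succ_eq_of_w_false (hg : GateTraj s v w x y) (hs : 1 ≤ s) {t : ℕ} (hw : w t = false) :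
    x (t + 1) = x t := by
  have ht : t ∈ Finset.Icc (t + 1 - s) t := Finset.mem_Icc.2 ⟨by omega, le_rfl⟩
  rw [hg.2 t, if_neg, if_neg] <;> rintro ⟨-, h⟩ <;> exact absurd (h t ht).2 (by simp [hw])

lemma succ_eq_OR (hg : GateTraj s v w x y) (hs : 1 ≤ s) {t : ℕ} (hx : x t = .OR)
    (hv : v t = true) : x (t + 1) = .OR := by
  have ht : t ∈ Finset.Icc (t + 1 - s) t := Finset.mem_Icc.2 ⟨by omega, le_rfl⟩
  rw [hg.2 t]
  split_ifs with h₁ h₂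
  · rfl
  · exact absurd (h₂.2 t ht).1 (by simp [hv])
  · exact hx

lemma succ_eq_YES (hg : GateTraj s v w x y) (hs : 1 ≤ s) {t : ℕ} (hx : x t = .YES)
    (hv : v t = false) : x (t + 1) = .YES := by
  have ht : t ∈ Finset.Icc (t + 1 - s) t := Finset.mem_Icc.2 ⟨by omega, le_rfl⟩
  rw [hg.2 t]
  split_ifs with h₁
  · exact absurd (h₁.2 t ht).1 (by simp [hv])
  · rfl
  · exact hx

lemma add_eq_of_w_false (hg : GateTraj s v w x y) (hs : 1 ≤ s) {t₀ d : ℕ}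
    (hw : ∀ τ, t₀ ≤ τ → τ < t₀ + d → w τ = false) : x (t₀ + d) = x t₀ :=
  eq_add_of_forall_succ rfl fun τ h₁ h₂ hτ => (hg.succ_eq_of_w_false hs (hw τ h₁ h₂)).trans hτ

lemma add_eq_OR_of_training (hg : GateTraj s v w x y) (hs : 1 ≤ s) {t₀ : ℕ}
    (htrain : ∀ τ, t₀ ≤ τ → τ < t₀ + s → v τ = true ∧ w τ = true) : x (t₀ + s) = .OR := by
  cases hx : x t₀ with
  | YES =>
    have h := hg.2 (t₀ + s - 1)
    rw [show t₀ + s - 1 + 1 = t₀ + s by omega, Nat.add_sub_cancel, hx] at h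
    rw [h, if_pos ⟨rfl, fun τ hτ => htrain τ (Finset.mem_Icc.1 hτ).1 (by grind)⟩]
  | OR => exact eq_add_of_forall_succ hx fun τ h₁ h₂ hτ => hg.succ_eq_OR hs hτ (htrain τ h₁ h₂).1

lemma add_eq_YES_of_training (hg : GateTraj s v w x y) (hs : 1 ≤ s) {t₀ : ℕ}
    (htrain : ∀ τ, t₀ ≤ τ → τ < t₀ + s → v τ = false ∧ w τ = true) : x (t₀ + s) = .YES := by
  cases hx : x t₀ with
  | YES => exact eq_add_of_forall_succ hx fun τ h₁ h₂ hτ => hg.succ_eq_YES hs hτ (htrain τ h₁ h₂).1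
  | OR =>
    have h := hg.2 (t₀ + s - 1)
    rw [show t₀ + s - 1 + 1 = t₀ + s by omega, Nat.add_sub_cancel, hx] at h
    rw [h, if_neg (by simp), if_pos ⟨rfl, fun τ hτ => htrain τ (Finset.mem_Icc.1 hτ).1 (by grind)⟩]

end GateTraj

section Ports

variable {X : ℕ → ℕ → GateState} {U : ℕ → Bool}

lemma netY_eq_false {i J : ℕ} (hJ : 1 ≤ J)
    (hU : ∀ k, 1 ≤ k → (k - 1) / 2 ^ i + 1 = J → U k = false) : netY X U i J = false := by
  induction i generalizing J with
  | zero => exact hU J hJ (by simp; omega)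
  | succ i ih =>
    have hchild : ∀ J', J' + 1 = 2 * J ∨ J' = 2 * J → netY X U i J' = false := by
      intro J' hJ'
      refine ih (by omega) fun k hk hkJ => hU k hk ?_
      rw [pow_succ, ← Nat.div_div_eq_div_mul]
      omega
    show gateOut _ (netY X U i (2 * J - 1)) (netY X U i (2 * J)) = false
    rw [hchild _ (by omega), hchild _ (by omega)]
    cases X (i + 1) J <;> rfl

lemma netY_eq_true {i J : ℕ} (hJ : 1 ≤ J) (hU : U ((J - 1) * 2 ^ i + 1) = true) :
    netY X U i J = true := by
  induction i generalizing J with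
  | zero => simpa [netY, Nat.sub_add_cancel hJ] using hU
  | succ i ih =>
    have hleft : (2 * J - 1 - 1) * 2 ^ i = (J - 1) * 2 ^ (i + 1) := by
      rw [show 2 * J - 1 - 1 = 2 * (J - 1) by omega]
      ring
    show gateOut _ (netY X U i (2 * J - 1)) _ = true
    rw [ih (by omega) (by rwa [hleft])]
    cases X (i + 1) J <;> simp [gateOut]

end Ports

lemma Uhat_eq_true_iff {p q k : ℕ} {c : GateState} :
    Uhat p q c k = true ↔ 2 ^ (p - 1) ∣ k - 1 ∧
      ((k - 1) / 2 ^ (p - 1) + 1 = 2 * q ∨ (k - 1) / 2 ^ (p - 1) + 1 = 2 * q - 1 ∧ c = .YES) := by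
  unfold Uhat
  split_ifs with h
  · have hq : 2 * q - 1 ≠ 2 * q := by generalize (k - 1) / 2 ^ (p - 1) = B at h; omega
    simp [Nat.dvd_iff_mod_eq_zero, h, hq, and_comm]
  · simp_all [Nat.dvd_iff_mod_eq_zero]
  · simp_all [Nat.dvd_iff_mod_eq_zero]

lemma le_two_pow_of_div_lt {m i j k : ℕ} (hij : IsNode m i j) (hk : (k - 1) / 2 ^ (i - 1) < 2 * j)
    (hk₁ : 1 ≤ k) : k ≤ 2 ^ m := by
  have ⟨hi, him, _, hj⟩ := hij
  have hlt := (Nat.div_lt_iff_lt_mul (by positivity)).1 hk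
  have hle : 2 * j * 2 ^ (i - 1) ≤ 2 ^ m :=
    calc 2 * j * 2 ^ (i - 1) ≤ 2 * 2 ^ (m - i) * 2 ^ (i - 1) := by gcongr
      _ = 2 ^ m := by rw [← pow_succ', ← pow_add]; congr 1; omega
  have := hlt.trans_le hle
  omega

section TrainingInput

variable {m p q : ℕ} {c : GateState} {X : ℕ → ℕ → GateState} {U : ℕ → Bool}

lemma nodeW_eq_true_of_eqOn_Uhat (hpq : IsNode m p q)
    (hU : Set.EqOn U (Uhat p q c) (Set.Icc 1 (2 ^ m))) : nodeW X U p q = true := by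
  have ⟨hp, _, hq, _⟩ := hpq
  have hdiv : ((2 * q - 1) * 2 ^ (p - 1) + 1 - 1) / 2 ^ (p - 1) = 2 * q - 1 := by
    rw [Nat.add_sub_cancel, Nat.mul_div_cancel _ (by positivity)]
  refine netY_eq_true (by omega) ?_
  rw [hU ⟨by omega, le_two_pow_of_div_lt hpq (by omega) (by omega)⟩, Uhat_eq_true_iff, hdiv]
  exact ⟨Dvd.intro_left _ (Nat.add_sub_cancel ..).symm, .inl (by omega)⟩

lemma nodeV_eq_of_eqOn_Uhat (hpq : IsNode m p q)
    (hU : Set.EqOn U (Uhat p q c) (Set.Icc 1 (2 ^ m))) : nodeV X U p q = decide (c = .YES) := by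
  have ⟨hp, _, hq, _⟩ := hpq
  cases c with
  | YES =>
    have hdiv : ((2 * q - 1 - 1) * 2 ^ (p - 1) + 1 - 1) / 2 ^ (p - 1) = 2 * q - 1 - 1 := by
      rw [Nat.add_sub_cancel, Nat.mul_div_cancel _ (by positivity)]
    refine netY_eq_true (by omega) ?_
    rw [hU ⟨by omega, le_two_pow_of_div_lt hpq (by omega) (by omega)⟩, Uhat_eq_true_iff, hdiv]
    exact ⟨Dvd.intro_left _ (Nat.add_sub_cancel ..).symm, .inr ⟨by omega, rfl⟩⟩
  | OR =>
    refine netY_eq_false (by omega) fun k hk hkJ => ?_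
    rw [hU ⟨hk, le_two_pow_of_div_lt hpq (by omega) hk⟩, ← Bool.not_eq_true, Uhat_eq_true_iff]
    rintro ⟨-, h | ⟨-, ⟨⟩⟩⟩
    omega

lemma nodeW_eq_false_of_eqOn_Uhat (hpq : IsNode m p q)
    (hU : Set.EqOn U (Uhat p q c) (Set.Icc 1 (2 ^ m))) {i j : ℕ} (hij : IsNode m i j)
    (hip : i ≤ p) (hne : ¬(i = p ∧ j = q)) : nodeW X U i j = false := by
  have ⟨hi, _, hj, _⟩ := hij
  refine netY_eq_false (by omega) fun k hk hkJ => ?_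
  rw [hU ⟨hk, le_two_pow_of_div_lt hij (by omega) hk⟩, ← Bool.not_eq_true, Uhat_eq_true_iff]
  rintro ⟨⟨a, ha⟩, hblock⟩
  rw [ha, Nat.mul_div_cancel_left _ (by positivity)] at hblock
  have hsplit : 2 ^ (p - 1) = 2 ^ (i - 1) * 2 ^ (p - i) := by rw [← pow_add]; congr 1; omega
  rw [ha, hsplit, mul_assoc, Nat.mul_div_cancel_left _ (by positivity)] at hkJ
  rcases hip.eq_or_lt with rfl | hlt
  · simp only [Nat.sub_self, pow_zero, one_mul] at hkJ
    omega
  · -- the trained ports start even blocks of size `2 ^ (i - 1)`, `w` of `(i, j)` reads an odd one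
    obtain ⟨b, hb⟩ := (Nat.even_pow.2 ⟨even_two, by omega⟩ : Even (2 ^ (p - i))).mul_right a
    omega

end TrainingInput

namespace NetTraj

variable {m s : ℕ} {U : ℕ → ℕ → Bool} {X : ℕ → ℕ → ℕ → GateState}

lemma gateTraj (hX : NetTraj m s U X) {i j : ℕ} (hij : IsNode m i j) :
    GateTraj s (fun t => nodeV (X t) (U t) i j) (fun t => nodeW (X t) (U t) i j)
      (fun t => X t i j) (fun t => netY (X t) (U t) i j) := by
  obtain ⟨hi, him, hj, hjm⟩ := hij
  refine ⟨fun t => ?_, hX i j hi him hj hjm⟩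
  obtain ⟨i, rfl⟩ : ∃ i', i = i' + 1 := ⟨i - 1, by omega⟩
  rfl

lemma add_eq_of_trained (hX : NetTraj m s U X) (hs : 1 ≤ s) {p q t₀ : ℕ} {c : GateState}
    (hpq : IsNode m p q)
    (hU : ∀ τ, t₀ ≤ τ → τ < t₀ + s → Set.EqOn (U τ) (Uhat p q (flipState c)) (Set.Icc 1 (2 ^ m))) :
    X (t₀ + s) p q = c := by
  have hg := hX.gateTraj hpq
  have hw τ h₁ h₂ := nodeW_eq_true_of_eqOn_Uhat (X := X τ) hpq (hU τ h₁ h₂)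
  have hv τ h₁ h₂ := nodeV_eq_of_eqOn_Uhat (X := X τ) hpq (hU τ h₁ h₂)
  cases c with
  | YES => exact hg.add_eq_YES_of_training hs fun τ h₁ h₂ => ⟨hv τ h₁ h₂, hw τ h₁ h₂⟩
  | OR => exact hg.add_eq_OR_of_training hs fun τ h₁ h₂ => ⟨hv τ h₁ h₂, hw τ h₁ h₂⟩

lemma add_eq_of_other_trained (hX : NetTraj m s U X) (hs : 1 ≤ s) {p q i j t₀ : ℕ}
    {c : GateState} (hpq : IsNode m p q) (hij : IsNode m i j) (hip : i ≤ p)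
    (hne : ¬(i = p ∧ j = q))
    (hU : ∀ τ, t₀ ≤ τ → τ < t₀ + s → Set.EqOn (U τ) (Uhat p q c) (Set.Icc 1 (2 ^ m))) :
    X (t₀ + s) i j = X t₀ i j :=
  (hX.gateTraj hij).add_eq_of_w_false hs fun τ h₁ h₂ =>
    nodeW_eq_false_of_eqOn_Uhat hpq (hU τ h₁ h₂) hij hip hne

end NetTraj

/-- Heap numbering: the root is `1` and the children of node `c` are `2c` and `2c + 1`, so
layer `i` occupies the codes in `[2 ^ (m - i), 2 ^ (m - i + 1))`. -/
def heapCode (m i j : ℕ) : ℕ := 2 ^ (m - i) + j - 1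

def heapLayer (m c : ℕ) : ℕ := m - Nat.log 2 c

def heapIndex (c : ℕ) : ℕ := c + 1 - 2 ^ Nat.log 2 c

lemma heapCode_lt {m i j : ℕ} (hij : IsNode m i j) : heapCode m i j < 2 ^ (m - i + 1) := by
  have ⟨_, _, hj, hjm⟩ := hij
  rw [heapCode, pow_succ]
  omega

lemma le_of_heapCode_le {m i j p q : ℕ} (hij : IsNode m i j) (hpq : IsNode m p q)
    (h : heapCode m p q ≤ heapCode m i j) : i ≤ p := by
  have ⟨_, him, _, _⟩ := hij
  have ⟨_, _, hq, _⟩ := hpq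
  by_contra! hpi
  have hpow : 2 ^ (m - i + 1) ≤ 2 ^ (m - p) := Nat.pow_le_pow_right two_pos (by omega)
  have := heapCode_lt hij
  unfold heapCode at *
  omega

lemma heapLayer_heapIndex_spec {m c : ℕ} (hc : 1 ≤ c) (hcm : c < 2 ^ m) :
    IsNode m (heapLayer m c) (heapIndex c) ∧ heapCode m (heapLayer m c) (heapIndex c) = c := by
  have hlo : 2 ^ Nat.log 2 c ≤ c := Nat.pow_log_le_self 2 (by omega)
  have hhi : c < 2 ^ (Nat.log 2 c + 1) := Nat.lt_pow_succ_log_self one_lt_two c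
  have hlog : Nat.log 2 c < m := Nat.log_lt_of_lt_pow (by omega) hcm
  have hlayer : m - heapLayer m c = Nat.log 2 c := by unfold heapLayer; omega
  rw [pow_succ] at hhi
  unfold IsNode heapCode heapIndex
  rw [hlayer]
  unfold heapLayer
  omega

/-- Phase `r` trains node `2 ^ m - 1 - r` of the heap numbering. Training a node as if its
state were the opposite of its target drives it to the target whatever its actual state, so
the input sequence needs no feedback. -/
def steeringInput (m s : ℕ) (Xstar : ℕ → ℕ → GateState) (τ : ℕ) : ℕ → Bool :=
  let c := 2 ^ m - 1 - τ / s
  Uhat (heapLayer m c) (heapIndex c) (flipState (Xstar (heapLayer m c) (heapIndex c)))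

lemma NetTraj.eq_target_of_steering {m s : ℕ} {U : ℕ → ℕ → Bool} {X : ℕ → ℕ → ℕ → GateState}
    {Xstar : ℕ → ℕ → GateState} (hX : NetTraj m s U X) (hs : 1 ≤ s)
    (hU : ∀ τ < (2 ^ m - 1) * s, Set.EqOn (U τ) (steeringInput m s Xstar τ) (Set.Icc 1 (2 ^ m)))
    {r : ℕ} (hr : r ≤ 2 ^ m - 1) {i j : ℕ} (hij : IsNode m i j)
    (hcode : 2 ^ m - r ≤ heapCode m i j) :
    X (r * s) i j = Xstar i j := by
  induction r generalizing i j with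
  | zero =>
    have ⟨hi, him, _, _⟩ := hij
    have hpow : 2 ^ (m - i + 1) ≤ 2 ^ m := Nat.pow_le_pow_right two_pos (by omega)
    have := heapCode_lt hij
    omega
  | succ r ih =>
    set c := 2 ^ m - 1 - r
    obtain ⟨hpq, hcpq⟩ := heapLayer_heapIndex_spec (m := m) (c := c) (by omega) (by omega)
    set p := heapLayer m c
    set q := heapIndex c
    have hphase τ (h₁ : r * s ≤ τ) (h₂ : τ < r * s + s) :
        Set.EqOn (U τ) (Uhat p q (flipState (Xstar p q))) (Set.Icc 1 (2 ^ m)) := by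
      have hτ : τ / s = r := Nat.div_eq_of_lt_le h₁ (by rwa [add_mul, one_mul])
      have hτT : τ < (2 ^ m - 1) * s :=
        h₂.trans_le (by rw [← add_one_mul]; exact Nat.mul_le_mul_right s hr)
      simpa only [steeringInput, hτ] using hU τ hτT
    rw [add_mul, one_mul]
    rcases (show c ≤ heapCode m i j by omega).eq_or_lt with hc | hc
    · have hip := le_of_heapCode_le hij hpq (by omega)
      have hpi := le_of_heapCode_le hpq hij (by omega)
      obtain rfl : i = p := le_antisymm hip hpi
      obtain rfl : j = q := by unfold heapCode at hc hcpq; omega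
      exact hX.add_eq_of_trained hs hpq hphase
    · rw [hX.add_eq_of_other_trained hs hpq hij (le_of_heapCode_le hij hpq (by omega))
        (by rintro ⟨rfl, rfl⟩; omega) hphase]
      exact ih (by omega) hij (by omega)

theorem stmt12_general (m s : ℕ) (hs : 1 ≤ s)
    (Xbar Xstar : ℕ → ℕ → GateState) :
    ∃ T : ℕ, T ≤ (2 ^ m - 1) * s ∧
      ∃ Useq : ℕ → ℕ → Bool,
        ∀ (U : ℕ → ℕ → Bool) (X : ℕ → ℕ → ℕ → GateState),
          NetTraj m s U X →
          (∀ i j : ℕ, 1 ≤ i → i ≤ m → 1 ≤ j → j ≤ 2 ^ (m - i) →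
            X 0 i j = Xbar i j) →
          (∀ τ : ℕ, τ < T → ∀ k : ℕ, 1 ≤ k → k ≤ 2 ^ m → U τ k = Useq τ k) →
          ∀ i j : ℕ, 1 ≤ i → i ≤ m → 1 ≤ j → j ≤ 2 ^ (m - i) →
            X T i j = Xstar i j := by
  refine ⟨(2 ^ m - 1) * s, le_rfl, steeringInput m s Xstar, fun U X hX _ hU i j hi him hj hjm => ?_⟩
  have hpow : 1 ≤ 2 ^ m := Nat.one_le_two_pow
  have hpow' : 1 ≤ 2 ^ (m - i) := Nat.one_le_two_pow
  exact hX.eq_target_of_steering hs (fun τ hτ k hk => hU τ hτ k hk.1 hk.2) le_rfl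
    ⟨hi, him, hj, hjm⟩ (by unfold heapCode; omega)

/-- for the network `Σ(m)` with unit training time `s ≥ 1`
and arbitrary initial state `X̄`, for every target state `X*` there exist a
time `T ≤ n·s` (with `n = 2^m - 1` the number of nodes) and an input sequence
`(U(0), …, U(T-1))` steering the state of the network from `X̄` to `X*`:
any network trajectory starting at `X̄` and driven by that input sequence
satisfies `X(T) = X*`. -/
theorem stmt12 (m s : ℕ) (hm : 1 ≤ m) (hs : 1 ≤ s)
    (Xbar Xstar : ℕ → ℕ → GateState) :
    ∃ T : ℕ, T ≤ (2 ^ m - 1) * s ∧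
      ∃ Useq : ℕ → ℕ → Bool,
        ∀ (U : ℕ → ℕ → Bool) (X : ℕ → ℕ → ℕ → GateState),
          NetTraj m s U X →
          (∀ i j : ℕ, 1 ≤ i → i ≤ m → 1 ≤ j → j ≤ 2 ^ (m - i) →
            X 0 i j = Xbar i j) →
          (∀ τ : ℕ, τ < T → ∀ k : ℕ, 1 ≤ k → k ≤ 2 ^ m → U τ k = Useq τ k) →
          ∀ i j : ℕ, 1 ≤ i → i ≤ m → 1 ≤ j → j ≤ 2 ^ (m - i) →
            X T i j = Xstar i j :=
  stmt12_general m s hs Xbar Xstar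
end

section
/- Consider the network Σ(m) of classical conditioning gates with unit training time s and arbitrary initial state X(0) = X̄ ∈ {YES, OR}^n, and let X* ∈ {YES, OR}^n be any target state. Enumerate the nodes in lexicographic order (1,1), (1,2), ..., (1,n₁), (2,1), ..., (m,1), and process them in this order: when node (i,j) is processed at the current time τ, if the current state of node (i,j) differs from its target value x*_{ij}, apply the constant input sequence U(τ) = U(τ+1) = ... = U(τ+s−1) = Û_{(i,j)} (defined with respect to the current state at time τ), which advances the time by s; otherwise do nothing. Then, letting k* be the number of nodes at which a flip was applied, the resulting final state satisfies X(k*·s) = X*. -/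
namespace Stmt13Aux

lemma mul_le_cancel {a b D : ℕ} (hD : 0 < D) (h : a * D ≤ b * D) : a ≤ b :=
  le_of_mul_le_mul_right h hD

lemma mul_lt_cancel {a b D : ℕ} (h : a * D < b * D) : a < b :=
  lt_of_mul_lt_mul_right h (Nat.zero_le _)

lemma netY_all_zero (X : ℕ → ℕ → GateState) (U : ℕ → Bool) :
    ∀ i j : ℕ, (∀ k, j * 2^i < k → k ≤ (j+1) * 2^i → U k = false) →
      netY X U i (j+1) = false := by
  intro i
  induction i with
  | zero =>
    intro j h
    show U (j+1) = false
    exact h (j+1) (by simp) (by simp)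
  | succ i ih =>
    intro j h
    have ep : (2:ℕ)^(i+1) = 2^i * 2 := pow_succ 2 i
    have hv : netY X U i (2*j+1) = false := by
      have := ih (2*j) ?_
      · simpa using this
      · intro k hk1 hk2
        apply h k
        · calc j * 2^(i+1) = 2*j * 2^i := by rw [ep]; ring
            _ < k := hk1
        · calc k ≤ (2*j+1) * 2^i := hk2
            _ ≤ (2*j+2) * 2^i := Nat.mul_le_mul_right _ (by omega)
            _ = (j+1) * 2^(i+1) := by rw [ep]; ring
    have hw : netY X U i ((2*j+1)+1) = false := by
      apply ih
      intro k hk1 hk2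
      apply h k
      · calc j * 2^(i+1) = 2*j*2^i := by rw [ep]; ring
          _ ≤ (2*j+1) * 2^i := Nat.mul_le_mul_right _ (by omega)
          _ < k := hk1
      · calc k ≤ (2*j+1+1)*2^i := hk2
          _ = (j+1) * 2^(i+1) := by rw [ep]; ring
    have e1 : 2*(j+1)-1 = 2*j+1 := by omega
    have e2 : 2*(j+1) = (2*j+1)+1 := by omega
    show gateOut (X (i+1) (j+1)) (netY X U i (2*(j+1)-1)) (netY X U i (2*(j+1))) = false
    rw [e1, e2, hv, hw]
    cases X (i+1) (j+1) <;> rfl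

lemma netY_one (X : ℕ → ℕ → GateState) (U : ℕ → Bool) :
    ∀ i j : ℕ, U (j * 2^i + 1) = true → netY X U i (j+1) = true := by
  intro i
  induction i with
  | zero =>
    intro j h
    show U (j+1) = true
    simpa using h
  | succ i ih =>
    intro j h
    have hv : netY X U i ((2*j)+1) = true := by
      apply ih
      have e : (2*j) * 2^i = j * 2^(i+1) := by rw [pow_succ]; ring
      rw [e]; exact h
    have e1 : 2*(j+1)-1 = (2*j)+1 := by omega
    show gateOut (X (i+1) (j+1)) (netY X U i (2*(j+1)-1)) (netY X U i (2*(j+1))) = true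
    rw [e1, hv]
    cases X (i+1) (j+1) <;> rfl

lemma uhat_false_of (p q k : ℕ) (x : GateState)
    (h2 : k - 1 ≠ (2*q - 1) * 2^(p-1))
    (h1 : x = GateState.OR ∨ k - 1 ≠ (2*q - 2) * 2^(p-1)) :
    Uhat p q x k = false := by
  have hdm : 2^(p-1) * ((k-1) / 2^(p-1)) + (k-1) % 2^(p-1) = k - 1 := Nat.div_add_mod _ _
  unfold Uhat
  split_ifs with hA hB
  · by_cases hr : (k-1) % 2^(p-1) = 0
    · rcases h1 with h1 | h1
      · subst h1; simp
      · exfalso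
        apply h1
        have hd : (k-1)/2^(p-1) = 2*q-2 := by
          generalize (k-1)/2^(p-1) = d at hA ⊢
          omega
        rw [hr, hd] at hdm
        rw [← hdm]; ring
    · simp [hr]
  · by_cases hr : (k-1) % 2^(p-1) = 0
    · exfalso
      apply h2
      have hd : (k-1)/2^(p-1) = 2*q-1 := by
        generalize (k-1)/2^(p-1) = d at hB ⊢
        omega
      rw [hr, hd] at hdm
      rw [← hdm]; ring
    · simp [hr]
  · rfl

lemma uhat_a (p q : ℕ) (hq : 1 ≤ q) (x : GateState) :
    Uhat p q x ((2*q-2) * 2^(p-1) + 1) = decide (x = GateState.YES) := by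
  have hE : 0 < 2^(p-1) := pow_pos (by norm_num) _
  unfold Uhat
  have e0 : (2*q-2) * 2^(p-1) + 1 - 1 = (2*q-2) * 2^(p-1) := by omega
  rw [e0, Nat.mul_div_cancel _ hE, Nat.mul_mod_left]
  rw [if_pos (by omega)]
  simp

lemma uhat_b (p q : ℕ) (hq : 1 ≤ q) (x : GateState) :
    Uhat p q x ((2*q-1) * 2^(p-1) + 1) = true := by
  have hE : 0 < 2^(p-1) := pow_pos (by norm_num) _
  unfold Uhat
  have e0 : (2*q-1) * 2^(p-1) + 1 - 1 = (2*q-1) * 2^(p-1) := by omega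
  rw [e0, Nat.mul_div_cancel _ hE, Nat.mul_mod_left]
  rw [if_neg (by omega), if_pos (by omega)]
  simp

lemma safe_w (m p q i j : ℕ) (x : GateState) (X' : ℕ → ℕ → GateState) (U' : ℕ → Bool)
    (hU : ∀ k, 1 ≤ k → k ≤ 2^m → U' k = Uhat p q x k)
    (hi1 : 1 ≤ i) (him : i ≤ m) (hj1 : 1 ≤ j) (hjm : j ≤ 2^(m-i))
    (hq1 : 1 ≤ q)
    (hcase : i < p ∨ (i = p ∧ j ≠ q)) :
    nodeW X' U' i j = false := by
  unfold nodeW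
  rw [show 2*j = (2*j-1)+1 from by omega]
  apply netY_all_zero
  intro k hk1 hk2
  have hD : 0 < 2^(i-1) := pow_pos (by norm_num) _
  have hje : (2*j-1+1) * 2^(i-1) = (2*j) * 2^(i-1) := by
    rw [show 2*j-1+1 = 2*j from by omega]
  have hkm : k ≤ 2^m := by
    calc k ≤ (2*j-1+1) * 2^(i-1) := hk2
      _ = j * 2^i := by
          rw [show 2*j-1+1 = 2*j from by omega,
              show (2:ℕ)^i = 2 * 2^(i-1) from by
                conv_lhs => rw [show i = (i-1)+1 from by omega]
                rw [pow_succ]; ring]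
          ring
      _ ≤ 2^(m-i) * 2^i := Nat.mul_le_mul_right _ hjm
      _ = 2^m := by rw [← pow_add]; congr 1; omega
  rw [hU k (by omega) hkm]
  have hb1 : (2*j-1) * 2^(i-1) ≤ k - 1 := by omega
  have hb2 : k - 1 < (2*j) * 2^(i-1) := by omega
  refine uhat_false_of p q k x ?_ (Or.inr ?_)
  · rcases hcase with hip | ⟨rfl, hjq⟩
    · intro heq
      have e : (2*q-1) * 2^(p-1) = (2*((2*q-1) * 2^(p-i-1))) * 2^(i-1) := by
        rw [show (2:ℕ)^(p-1) = 2^(p-i) * 2^(i-1) from by rw [← pow_add]; congr 1; omega,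
            show (2:ℕ)^(p-i) = 2 * 2^(p-i-1) from by
              conv_lhs => rw [show p-i = (p-i-1)+1 from by omega]
              rw [pow_succ]; ring]
        ring
      rw [e] at heq
      have h5m : (2*j-1) * 2^(i-1) ≤ (2*((2*q-1)*2^(p-i-1))) * 2^(i-1) := by omega
      have h5 : 2*j-1 ≤ 2*((2*q-1)*2^(p-i-1)) := mul_le_cancel hD h5m
      have h6m : (2*((2*q-1)*2^(p-i-1))) * 2^(i-1) < (2*j) * 2^(i-1) := by omega
      have h6 : 2*((2*q-1)*2^(p-i-1)) < 2*j := mul_lt_cancel h6m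
      omega
    · intro heq
      have h5m : (2*j-1) * 2^(i-1) ≤ (2*q-1) * 2^(i-1) := by omega
      have h5 : 2*j-1 ≤ 2*q-1 := mul_le_cancel hD h5m
      have h6m : (2*q-1) * 2^(i-1) < (2*j) * 2^(i-1) := by omega
      have h6 : 2*q-1 < 2*j := mul_lt_cancel h6m
      omega
  · rcases hcase with hip | ⟨rfl, hjq⟩
    · intro heq
      have e : (2*q-2) * 2^(p-1) = (2*((q-1) * 2^(p-i))) * 2^(i-1) := by
        rw [show (2:ℕ)^(p-1) = 2^(p-i) * 2^(i-1) from by rw [← pow_add]; congr 1; omega,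
            show 2*q-2 = 2*(q-1) from by omega]
        ring
      rw [e] at heq
      have h5m : (2*j-1) * 2^(i-1) ≤ (2*((q-1)*2^(p-i))) * 2^(i-1) := by omega
      have h5 : 2*j-1 ≤ 2*((q-1)*2^(p-i)) := mul_le_cancel hD h5m
      have h6m : (2*((q-1)*2^(p-i))) * 2^(i-1) < (2*j) * 2^(i-1) := by omega
      have h6 : 2*((q-1)*2^(p-i)) < 2*j := mul_lt_cancel h6m
      omega
    · intro heq
      have h5m : (2*j-1) * 2^(i-1) ≤ (2*q-2) * 2^(i-1) := by omega
      have h5 : 2*j-1 ≤ 2*q-2 := mul_le_cancel hD h5m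
      have h6m : (2*q-2) * 2^(i-1) < (2*j) * 2^(i-1) := by omega
      have h6 : 2*q-2 < 2*j := mul_lt_cancel h6m
      omega

lemma flip_w (m p q : ℕ) (x : GateState) (X' : ℕ → ℕ → GateState) (U' : ℕ → Bool)
    (hU : ∀ k, 1 ≤ k → k ≤ 2^m → U' k = Uhat p q x k)
    (hp1 : 1 ≤ p) (hpm : p ≤ m) (hq1 : 1 ≤ q) (hqm : q ≤ 2^(m-p)) :
    nodeW X' U' p q = true := by
  have hE : 0 < 2^(p-1) := pow_pos (by norm_num) _
  have hub : (2*q) * 2^(p-1) ≤ 2^m := by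
    calc (2*q) * 2^(p-1) = q * (2 * 2^(p-1)) := by ring
      _ = q * 2^p := by
          rw [show (2:ℕ) * 2^(p-1) = 2^p from by
            conv_rhs => rw [show p = (p-1)+1 from by omega]
            rw [pow_succ]; ring]
      _ ≤ 2^(m-p) * 2^p := Nat.mul_le_mul_right _ hqm
      _ = 2^m := by rw [← pow_add]; congr 1; omega
  have step : ∀ a b : ℕ, a + 1 = b → a * 2^(p-1) + 2^(p-1) = b * 2^(p-1) := by
    intro a b h; rw [← h]; ring
  have hlink : (2*q-1) * 2^(p-1) + 2^(p-1) = (2*q) * 2^(p-1) := step _ _ (by omega)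
  unfold nodeW
  rw [show 2*q = (2*q-1)+1 from by omega]
  apply netY_one
  rw [hU _ (by omega) (by omega), uhat_b p q hq1]

lemma flip_v (m p q : ℕ) (x : GateState) (X' : ℕ → ℕ → GateState) (U' : ℕ → Bool)
    (hU : ∀ k, 1 ≤ k → k ≤ 2^m → U' k = Uhat p q x k)
    (hp1 : 1 ≤ p) (hpm : p ≤ m) (hq1 : 1 ≤ q) (hqm : q ≤ 2^(m-p)) :
    nodeV X' U' p q = decide (x = GateState.YES) := by
  have hE : 0 < 2^(p-1) := pow_pos (by norm_num) _
  have hub : (2*q) * 2^(p-1) ≤ 2^m := by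
    calc (2*q) * 2^(p-1) = q * (2 * 2^(p-1)) := by ring
      _ = q * 2^p := by
          rw [show (2:ℕ) * 2^(p-1) = 2^p from by
            conv_rhs => rw [show p = (p-1)+1 from by omega]
            rw [pow_succ]; ring]
      _ ≤ 2^(m-p) * 2^p := Nat.mul_le_mul_right _ hqm
      _ = 2^m := by rw [← pow_add]; congr 1; omega
  have step : ∀ a b : ℕ, a + 1 = b → a * 2^(p-1) + 2^(p-1) = b * 2^(p-1) := by
    intro a b h; rw [← h]; ring
  have hlink1 : (2*q-1) * 2^(p-1) + 2^(p-1) = (2*q) * 2^(p-1) := step _ _ (by omega)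
  have hlink2 : (2*q-2) * 2^(p-1) + 2^(p-1) = (2*q-1) * 2^(p-1) := step _ _ (by omega)
  have hlink3 : (2*q-2+1) * 2^(p-1) = (2*q-1) * 2^(p-1) := by
    rw [show 2*q-2+1 = 2*q-1 from by omega]
  unfold nodeV
  rw [show 2*q-1 = (2*q-2)+1 from by omega]
  cases x with
  | YES =>
    have := netY_one X' U' (p-1) (2*q-2) (by
      rw [hU _ (by omega) (by omega), uhat_a p q hq1]
      simp)
    simpa using this
  | OR =>
    have := netY_all_zero X' U' (p-1) (2*q-2) (by
      intro k hk1 hk2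
      have hk2' : k ≤ (2*q-1) * 2^(p-1) := by omega
      rw [hU k (by omega) (by omega)]
      exact uhat_false_of p q k _ (by omega) (Or.inl rfl))
    simpa using this

lemma exists_node (m ℓ : ℕ) (hm : 1 ≤ m) (hℓ : ℓ < 2^m - 1) :
    ∃ p q, 1 ≤ p ∧ p ≤ m ∧ 1 ≤ q ∧ q ≤ 2^(m-p) ∧ 2^m - 2^(m-p+1) + (q-1) = ℓ := by
  have h2m : 2 ≤ 2^m := by
    calc (2:ℕ) = 2^1 := rfl
      _ ≤ 2^m := Nat.pow_le_pow_right (by norm_num) hm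
  have hd2 : 2 ≤ 2^m - ℓ := by omega
  have h1 : 2^(Nat.log 2 (2^m - ℓ - 1)) ≤ 2^m - ℓ - 1 :=
    Nat.pow_log_le_self 2 (by omega)
  have h2 : 2^m - ℓ - 1 < 2^(Nat.log 2 (2^m - ℓ - 1) + 1) :=
    Nat.lt_pow_succ_log_self (by norm_num) _
  set e := Nat.log 2 (2^m - ℓ - 1) with he
  have hem : e < m := by
    have hlt : 2^e < 2^m := by omega
    exact (Nat.pow_lt_pow_iff_right (by norm_num)).mp hlt
  have hE2 : (2:ℕ)^(e+1) = 2*2^e := by rw [pow_succ]; ring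
  have hle : 2^(e+1) ≤ 2^m := Nat.pow_le_pow_right (by norm_num) (by omega)
  have hme : m - (m - e) = e := by omega
  have hme1 : m - (m-e) + 1 = e + 1 := by omega
  refine ⟨m - e, ℓ - (2^m - 2^(e+1)) + 1, by omega, by omega, by omega, ?_, ?_⟩
  · rw [hme]; omega
  · rw [hme1]; omega

lemma idx_order (m i j p q : ℕ) (hi1 : 1 ≤ i) (him : i ≤ m) (hj1 : 1 ≤ j) (hjm : j ≤ 2^(m-i))
    (hp1 : 1 ≤ p) (hpm : p ≤ m) (hq1 : 1 ≤ q) (hqm : q ≤ 2^(m-p))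
    (h : 2^m - 2^(m-i+1) + (j-1) < 2^m - 2^(m-p+1) + (q-1)) :
    i < p ∨ (i = p ∧ j < q) := by
  rcases lt_trichotomy i p with h1 | h1 | h1
  · exact Or.inl h1
  · subst h1; exact Or.inr ⟨rfl, by omega⟩
  · exfalso
    have e1 : (2:ℕ)^(m-i+1) = 2*2^(m-i) := by rw [pow_succ]; ring
    have e2 : (2:ℕ)^(m-p+1) = 2*2^(m-p) := by rw [pow_succ]; ring
    have l1 : 2^(m-i+1) ≤ 2^(m-p) := Nat.pow_le_pow_right (by norm_num) (by omega)
    have l2 : 2^(m-p+1) ≤ 2^m := Nat.pow_le_pow_right (by norm_num) (by omega)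
    have l3 : 0 < 2^(m-i) := pow_pos (by norm_num) _
    omega

end Stmt13Aux


/-- Theorem 2, correctness of Algorithm 1: consider the
network `Σ(m)` with unit training time `s ≥ 1`, an arbitrary initial state, and
a target state `X*`.  Let `nodes` enumerate the `n = 2^m - 1` nodes in
lexicographic order `(1,1), (1,2), …, (1,n₁), (2,1), …, (m,1)` (node `(i,j)`
receives index `2^m - 2^(m-i+1) + (j-1)`), and let `c ℓ` be the number of flips
performed before processing the `ℓ`-th node, with `c 0 = 0`.  When node
`nodes ℓ` is processed at the current time `c ℓ · s`: if its current state
differs from its target value, the constant input sequence `Û_{(nodes ℓ)}`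
(defined with respect to the current state) is applied for `s` steps and the
flip counter increases; otherwise nothing is done and the counter is unchanged.
Then the final state satisfies `X(k*·s) = X*`, where `k* = c n` is the total
number of flips. -/
theorem stmt13 (m s : ℕ) (hm : 1 ≤ m) (hs : 1 ≤ s)
    (Xstar : ℕ → ℕ → GateState)
    (U : ℕ → ℕ → Bool) (X : ℕ → ℕ → ℕ → GateState)
    (hnet : NetTraj m s U X)
    (nodes : ℕ → ℕ × ℕ)
    (hnodes : ∀ i j : ℕ, 1 ≤ i → i ≤ m → 1 ≤ j → j ≤ 2 ^ (m - i) →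
      nodes (2 ^ m - 2 ^ (m - i + 1) + (j - 1)) = (i, j))
    (c : ℕ → ℕ) (hc0 : c 0 = 0)
    (hflip : ∀ ℓ : ℕ, ℓ < 2 ^ m - 1 →
      X (c ℓ * s) (nodes ℓ).1 (nodes ℓ).2 ≠ Xstar (nodes ℓ).1 (nodes ℓ).2 →
        c (ℓ + 1) = c ℓ + 1 ∧
        ∀ r : ℕ, r < s → ∀ k : ℕ, 1 ≤ k → k ≤ 2 ^ m →
          U (c ℓ * s + r) k =
            Uhat (nodes ℓ).1 (nodes ℓ).2
              (X (c ℓ * s) (nodes ℓ).1 (nodes ℓ).2) k)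
    (hskip : ∀ ℓ : ℕ, ℓ < 2 ^ m - 1 →
      X (c ℓ * s) (nodes ℓ).1 (nodes ℓ).2 = Xstar (nodes ℓ).1 (nodes ℓ).2 →
        c (ℓ + 1) = c ℓ) :
    ∀ i j : ℕ, 1 ≤ i → i ≤ m → 1 ≤ j → j ≤ 2 ^ (m - i) →
      X (c (2 ^ m - 1) * s) i j = Xstar i j := by
  have main : ∀ ℓ, ℓ ≤ 2^m - 1 →
      ∀ i j, 1 ≤ i → i ≤ m → 1 ≤ j → j ≤ 2^(m-i) →
        2^m - 2^(m-i+1) + (j-1) < ℓ → X (c ℓ * s) i j = Xstar i j := by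
    intro ℓ
    induction ℓ with
    | zero => intro _ i j _ _ _ _ h; omega
    | succ ℓ ih =>
      intro hℓ1 i j hi1 him hj1 hjm hidx
      have hℓ : ℓ < 2^m - 1 := by omega
      obtain ⟨p, q, hp1, hpm, hq1, hqm, hpqidx⟩ := Stmt13Aux.exists_node m ℓ hm hℓ
      have hnℓ : nodes ℓ = (p, q) := by
        rw [← hpqidx]; exact hnodes p q hp1 hpm hq1 hqm
      by_cases hsk : X (c ℓ * s) p q = Xstar p q
      · have hceq : c (ℓ+1) = c ℓ := hskip ℓ hℓ (by rw [hnℓ]; exact hsk)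
        rw [hceq]
        rcases Nat.lt_or_ge (2^m - 2^(m-i+1) + (j-1)) ℓ with hlt | hge
        · exact ih (by omega) i j hi1 him hj1 hjm hlt
        · have heq : 2^m - 2^(m-i+1) + (j-1) = ℓ := by omega
          have e1 : ((i, j) : ℕ × ℕ) = (p, q) := by
            rw [← hnodes i j hi1 him hj1 hjm, heq, hnℓ]
          simp only [Prod.mk.injEq] at e1
          obtain ⟨rfl, rfl⟩ := e1
          exact hsk
      · obtain ⟨hceq, hU⟩ := hflip ℓ hℓ (by rw [hnℓ]; exact hsk)
        rw [hnℓ] at hU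
        have hcs : c (ℓ+1) * s = c ℓ * s + s := by rw [hceq]; ring
        rw [hcs]
        have hU' : ∀ r : ℕ, r < s → ∀ k : ℕ, 1 ≤ k → k ≤ 2^m →
            U (c ℓ * s + r) k = Uhat p q (X (c ℓ * s) p q) k := hU
        have inner : ∀ r, r ≤ s → ∀ i' j', 1 ≤ i' → i' ≤ m → 1 ≤ j' → j' ≤ 2^(m-i') →
            (i' < p ∨ (i' = p ∧ j' ≠ q)) → X (c ℓ * s + r) i' j' = X (c ℓ * s) i' j' := by
          intro r
          induction r with
          | zero => intro _ i' j' _ _ _ _ _; rfl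
          | succ r ihr =>
            intro hr i' j' h1 h2 h3 h4 hsafe
            have hUt : ∀ k, 1 ≤ k → k ≤ 2^m →
                U (c ℓ * s + r) k = Uhat p q (X (c ℓ * s) p q) k :=
              fun k hk1 hk2 => hU' r (by omega) k hk1 hk2
            have hw : nodeW (X (c ℓ * s + r)) (U (c ℓ * s + r)) i' j' = false :=
              Stmt13Aux.safe_w m p q i' j' _ _ _ hUt h1 h2 h3 h4 hq1 hsafe
            have hmem : c ℓ * s + r ∈ Finset.Icc (c ℓ * s + r + 1 - s) (c ℓ * s + r) :=
              Finset.mem_Icc.mpr (by omega)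
            have H := hnet i' j' h1 h2 h3 h4 (c ℓ * s + r)
            rw [if_neg, if_neg] at H
            · exact H.trans (ihr (by omega) i' j' h1 h2 h3 h4 hsafe)
            · rintro ⟨-, hall⟩
              have hbad := (hall _ hmem).2
              rw [hw] at hbad
              exact Bool.false_ne_true hbad
            · rintro ⟨-, hall⟩
              have hbad := (hall _ hmem).2
              rw [hw] at hbad
              exact Bool.false_ne_true hbad
        rcases Nat.lt_or_ge (2^m - 2^(m-i+1) + (j-1)) ℓ with hlt | hge
        · have hsafe : i < p ∨ (i = p ∧ j ≠ q) := by
            rcases Stmt13Aux.idx_order m i j p q hi1 him hj1 hjm hp1 hpm hq1 hqm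
                (by omega) with h | ⟨h, h'⟩
            · exact Or.inl h
            · exact Or.inr ⟨h, by omega⟩
          rw [inner s le_rfl i j hi1 him hj1 hjm hsafe]
          exact ih (by omega) i j hi1 him hj1 hjm hlt
        · have heq : 2^m - 2^(m-i+1) + (j-1) = ℓ := by omega
          have e1 : ((i, j) : ℕ × ℕ) = (p, q) := by
            rw [← hnodes i j hi1 him hj1 hjm, heq, hnℓ]
          simp only [Prod.mk.injEq] at e1
          obtain ⟨rfl, rfl⟩ := e1
          have key : ∀ τ ∈ Finset.Icc (c ℓ * s) (c ℓ * s + s - 1),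
              nodeV (X τ) (U τ) i j = decide (X (c ℓ * s) i j = GateState.YES) ∧
              nodeW (X τ) (U τ) i j = true := by
            intro τ hτ
            rw [Finset.mem_Icc] at hτ
            have hUτ : ∀ k, 1 ≤ k → k ≤ 2^m → U τ k = Uhat i j (X (c ℓ * s) i j) k := by
              intro k hk1 hk2
              have h := hU' (τ - c ℓ * s) (by omega) k hk1 hk2
              rwa [show c ℓ * s + (τ - c ℓ * s) = τ from by omega] at h
            exact ⟨Stmt13Aux.flip_v m i j _ _ _ hUτ hi1 him hj1 hjm,
                   Stmt13Aux.flip_w m i j _ _ _ hUτ hi1 him hj1 hjm⟩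
          have H := hnet i j hi1 him hj1 hjm (c ℓ * s + s - 1)
          rw [show c ℓ * s + s - 1 + 1 = c ℓ * s + s from by omega] at H
          rw [show c ℓ * s + s - s = c ℓ * s from by omega] at H
          cases hxx : X (c ℓ * s) i j with
          | YES =>
            rw [if_pos ⟨hxx, fun τ hτ =>
              ⟨by rw [(key τ hτ).1, hxx]; decide, (key τ hτ).2⟩⟩] at H
            rw [H]
            cases hy : Xstar i j with
            | YES => exact absurd (hxx.trans hy.symm) hsk
            | OR => rfl
          | OR =>
            rw [if_neg (fun hcon => GateState.noConfusion (hxx.symm.trans hcon.1)),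
                if_pos ⟨hxx, fun τ hτ =>
                  ⟨by rw [(key τ hτ).1, hxx]; decide, (key τ hτ).2⟩⟩] at H
            rw [H]
            cases hy : Xstar i j with
            | YES => rfl
            | OR => exact absurd (hxx.trans hy.symm) hsk
  intro i j hi1 him hj1 hjm
  apply main (2^m - 1) le_rfl i j hi1 him hj1 hjm
  have h2m : 2 ≤ 2^m := by
    calc (2:ℕ) = 2^1 := rfl
      _ ≤ 2^m := Nat.pow_le_pow_right (by norm_num) hm
  have e1 : (2:ℕ)^(m-i+1) = 2*2^(m-i) := by rw [pow_succ]; ring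
  have l2 : 2^(m-i+1) ≤ 2^m := Nat.pow_le_pow_right (by norm_num) (by omega)
  have l3 : 0 < 2^(m-i) := pow_pos (by norm_num) _
  omega
end

section
/- Consider the network Σ(m) of classical conditioning gates with m ≥ 2. There is no state X̄ ∈ {YES, OR}^n such that, with X(t) = X̄, the network's input-output relation at time t equals a disjunction (⋁_{j∈J₁} v_{1j}(t)) ∨ (⋁_{j∈J₂} w_{1j}(t)) with 1 ∉ J₁; in particular, the relation y_m(t) = v_{12}(t) (for all external inputs) is not realizable by any state of Σ(m). -/

lemma netY_leftchain (X : ℕ → ℕ → GateState) :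
    ∀ i, netY X (fun k => decide (k = 1)) i 1 = true := by
  intro i
  induction i with
  | zero => simp [netY]
  | succ n ih =>
      have : netY X (fun k => decide (k = 1)) (n + 1) 1 =
          gateOut (X (n + 1) 1) (netY X (fun k => decide (k = 1)) n (2 * 1 - 1))
            (netY X (fun k => decide (k = 1)) n (2 * 1)) := rfl
      rw [this]
      norm_num [ih]
      cases X (n + 1) 1 <;> simp [gateOut, ih]

/-- for the network `Σ(m)` with `m ≥ 2`, no state `X̄`
realizes an input-output relation `(⋁_{j∈J₁} v₁ⱼ) ∨ (⋁_{j∈J₂} w₁ⱼ)` with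
`1 ∉ J₁`; in particular, the relation `y_m = v₁₂` (i.e. the output equals the
external port `3 = 2·2-1`, for all external inputs) is not realizable by any
state of `Σ(m)`. -/
theorem stmt14 (m : ℕ) (hm : 2 ≤ m) :
    (¬ ∃ (X : ℕ → ℕ → GateState) (J₁ J₂ : Finset ℕ),
        J₁ ⊆ Finset.Icc 1 (2 ^ (m - 1)) ∧ J₂ ⊆ Finset.Icc 1 (2 ^ (m - 1)) ∧
        1 ∉ J₁ ∧
        ∀ U : ℕ → Bool,
          netY X U m 1 =
            ((J₁.sup fun j => U (2 * j - 1)) || (J₂.sup fun j => U (2 * j)))) ∧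
    ¬ ∃ X : ℕ → ℕ → GateState, ∀ U : ℕ → Bool, netY X U m 1 = U 3 := by
  constructor
  · rintro ⟨X, J₁, J₂, hJ1, hJ2, h1, h⟩
    have := h (fun k => decide (k = 1))
    rw [netY_leftchain] at this
    have hsup1 : (J₁.sup fun j => decide (2 * j - 1 = 1)) = false := by
      apply (Finset.sup_eq_bot_iff _ _).mpr
      intro j hj
      have hj1 := hJ1 hj
      simp only [Finset.mem_Icc] at hj1
      have : j ≠ 1 := fun hh => h1 (hh ▸ hj)
      show decide _ = false
      simp only [decide_eq_false_iff_not]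
      omega
    have hsup2 : (J₂.sup fun j => decide (2 * j = 1)) = false := by
      apply (Finset.sup_eq_bot_iff _ _).mpr
      intro j hj
      show decide _ = false
      simp only [decide_eq_false_iff_not]
      omega
    simp only [hsup1, hsup2, Bool.or_false] at this
    exact Bool.true_eq_false.mp this
  · rintro ⟨X, h⟩
    have := h (fun k => decide (k = 1))
    rw [netY_leftchain] at this
    simp at this
end
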